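/- arXiv:1212.0248 — 6 statements merged into one kernel-verified Lean document; each statement's English description precedes it below -/
import Mathlib

section
/- Let 0 < α < 1 and n ≥ 1. For every s > 0 and every ε > 0 there exist finite types X₁, …, Xₙ and a probability distribution P on X₁ × ⋯ × Xₙ such that |H_α(P_{[n]}) − s| ≤ ε and H_α(P_I) ≤ ε for every nonempty proper subset I ⊊ [n]. (Moreover the construction is classical, i.e. realized by a probability distribution.) -/
noncomputable section

/-- A probability distribution on a finite type. -/
def IsProbDist {X : Type*} [Fintype X] (P : X → ℝ) : Prop :=
  (∀ x, 0 ≤ P x) ∧ ∑ x, P x = 1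

/-- Marginal of a distribution on a finite product, on the coordinates in `I`. -/
def marginal {n : ℕ} {X : Fin n → Type*} [∀ i, Fintype (X i)]
    (P : (∀ i, X i) → ℝ) (I : Finset (Fin n)) :
    (∀ i : {i : Fin n // i ∈ I}, X i.1) → ℝ :=
  fun x => ∑ y : ∀ j : {j : Fin n // j ∉ I}, X j.1,
    P (fun i => if h : i ∈ I then x ⟨i, h⟩ else y ⟨i, h⟩)

/-- Rényi α-entropy (base 2) of a distribution. -/
def renyiH {X : Type*} [Fintype X] (α : ℝ) (P : X → ℝ) : ℝ :=
  (1 / (1 - α)) * Real.logb 2 (∑ x, P x ^ α)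

/-! Take `P = δ · uniform + (1 - δ) · (point mass)` on `[m]ⁿ`. Every marginal `P_I` is a mixture
of the same shape on `[m]^|I|`, and on `K` points such a mixture has `∑ P^α ≈ 1 + δ^α K^(1-α)`.
Since `α < 1`, the tiny uniform part dominates: by continuity in `δ` it can be tuned so that
`H_α(P) = s` exactly, while every proper marginal lives on `K ≤ mⁿ / m` points and so has
`∑ P_I^α - 1` smaller by the factor `m^(1-α)`, which is negligible for large `m`. -/

open Finset Real Filter

theorem mul_div_rpow {K δ : ℝ} (hK : 0 < K) (hδ : 0 ≤ δ) (α : ℝ) :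
    K * (δ / K) ^ α = δ ^ α * K ^ (1 - α) := by
  rw [div_rpow hδ hK.le, rpow_sub hK, rpow_one]
  field_simp

/-- `∑ x, P x ^ α` for `P = spikeMix δ x₀` on `N` points. -/
def spikePowSum (N δ α : ℝ) : ℝ :=
  (N - 1) * (δ / N) ^ α + (δ / N + (1 - δ)) ^ α

section SpikePowSum

variable {N K δ α : ℝ}

theorem spikePowSum_zero (N : ℝ) (hα : 0 < α) : spikePowSum N 0 α = 1 := by
  simp [spikePowSum, zero_rpow hα.ne']

theorem spikePowSum_one (hN : 0 < N) : spikePowSum N 1 α = N ^ (1 - α) := by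
  rw [spikePowSum, sub_self, add_zero, div_rpow zero_le_one hN.le, one_rpow,
    rpow_sub hN, rpow_one]
  field_simp
  ring

theorem continuous_spikePowSum (N : ℝ) (hα : 0 ≤ α) : Continuous fun δ => spikePowSum N δ α := by
  have := continuous_rpow_const hα
  unfold spikePowSum
  fun_prop

theorem exists_spikePowSum_eq {T : ℝ} (hN : 0 < N) (hα : 0 < α)
    (hT : T ∈ Set.Icc 1 (N ^ (1 - α))) : ∃ δ ∈ Set.Icc (0 : ℝ) 1, spikePowSum N δ α = T := by
  have := intermediate_value_Icc zero_le_one (continuous_spikePowSum N hα.le).continuousOn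
  rw [spikePowSum_zero N hα, spikePowSum_one hN] at this
  exact this hT

theorem div_add_one_sub_mem_Icc (hK : 1 ≤ K) (hδ : δ ∈ Set.Icc (0 : ℝ) 1) :
    δ / K + (1 - δ) ∈ Set.Icc (0 : ℝ) 1 := by
  have := div_le_self hδ.1 hK
  have := div_nonneg hδ.1 (zero_le_one.trans hK)
  constructor <;> linarith [hδ.2]

theorem one_le_spikePowSum (hK : 1 ≤ K) (hδ : δ ∈ Set.Icc (0 : ℝ) 1) (hα : α ≤ 1) :
    1 ≤ spikePowSum K δ α := by
  have hK0 : 0 < K := zero_lt_one.trans_le hK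
  have hq := div_add_one_sub_mem_Icc hK hδ
  have hp : δ / K ∈ Set.Icc (0 : ℝ) 1 :=
    ⟨div_nonneg hδ.1 hK0.le, (div_le_one hK0).2 (hδ.2.trans hK)⟩
  calc (1 : ℝ) = (K - 1) * (δ / K) + (δ / K + (1 - δ)) := by field_simp; ring
    _ ≤ spikePowSum K δ α := add_le_add
        (mul_le_mul_of_nonneg_left (self_le_rpow_of_le_one hp.1 hp.2 hα) (by linarith))
        (self_le_rpow_of_le_one hq.1 hq.2 hα)

theorem spikePowSum_le (hK : 1 ≤ K) (hδ : δ ∈ Set.Icc (0 : ℝ) 1) (hα : 0 ≤ α) :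
    spikePowSum K δ α ≤ 1 + δ ^ α * K ^ (1 - α) := by
  have hK0 : 0 < K := zero_lt_one.trans_le hK
  have hq := div_add_one_sub_mem_Icc hK hδ
  rw [← mul_div_rpow hK0 hδ.1, add_comm 1]
  exact add_le_add
    (mul_le_mul_of_nonneg_right (by linarith) (rpow_nonneg (div_nonneg hδ.1 hK0.le) α))
    (rpow_le_one hq.1 hq.2 hα)

theorem rpow_mul_rpow_le_two_mul_spikePowSum (hN : 2 ≤ N) (hδ : δ ∈ Set.Icc (0 : ℝ) 1)
    (α : ℝ) : δ ^ α * N ^ (1 - α) ≤ 2 * spikePowSum N δ α := by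
  have hN0 : 0 < N := by linarith
  have hp := rpow_nonneg (div_nonneg hδ.1 hN0.le) α
  have hq := rpow_nonneg (div_add_one_sub_mem_Icc (by linarith : (1 : ℝ) ≤ N) hδ).1 α
  rw [← mul_div_rpow hN0 hδ.1, spikePowSum]
  nlinarith

theorem spikePowSum_le_of_mul_le {m : ℝ} (hK : 1 ≤ K) (hm : 0 < m) (hKm : K * m ≤ N)
    (hN : 2 ≤ N) (hδ : δ ∈ Set.Icc (0 : ℝ) 1) (hα0 : 0 ≤ α) (hα1 : α ≤ 1) :
    spikePowSum K δ α ≤ 1 + 2 * spikePowSum N δ α / m ^ (1 - α) := by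
  have hKm' : K ^ (1 - α) * m ^ (1 - α) ≤ N ^ (1 - α) := by
    rw [← mul_rpow (by linarith) hm.le]
    exact rpow_le_rpow (by positivity) hKm (by linarith)
  refine (spikePowSum_le hK hδ hα0).trans (add_le_add_right ?_ 1)
  rw [le_div_iff₀ (rpow_pos_of_pos hm _)]
  calc δ ^ α * K ^ (1 - α) * m ^ (1 - α) = δ ^ α * (K ^ (1 - α) * m ^ (1 - α)) := by ring
    _ ≤ δ ^ α * N ^ (1 - α) := mul_le_mul_of_nonneg_left hKm' (rpow_nonneg hδ.1 α)
    _ ≤ 2 * spikePowSum N δ α := rpow_mul_rpow_le_two_mul_spikePowSum hN hδ α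

end SpikePowSum

section SpikeMixture

variable {X : Type*} [Fintype X] [DecidableEq X]

def spikeMix (δ : ℝ) (x₀ : X) : X → ℝ :=
  fun x => δ / Fintype.card X + (1 - δ) * if x = x₀ then 1 else 0

theorem isProbDist_spikeMix {δ : ℝ} (hδ : δ ∈ Set.Icc (0 : ℝ) 1) (x₀ : X) :
    IsProbDist (spikeMix δ x₀) := by
  have : Nonempty X := ⟨x₀⟩
  have hcard : (0 : ℝ) < Fintype.card X := by exact_mod_cast Fintype.card_pos
  have := hδ.1
  have : 0 ≤ 1 - δ := by linarith [hδ.2]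
  refine ⟨fun x => by unfold spikeMix; positivity, ?_⟩
  simp only [spikeMix, sum_add_distrib, sum_const, card_univ, nsmul_eq_mul, ← mul_sum,
    sum_ite_eq', mem_univ, if_true]
  field_simp
  ring

theorem sum_rpow_spikeMix (δ α : ℝ) (x₀ : X) :
    ∑ x, spikeMix δ x₀ x ^ α = spikePowSum (Fintype.card X) δ α := by
  have : Nonempty X := ⟨x₀⟩
  rw [← add_sum_erase _ _ (mem_univ x₀), sum_congr rfl fun x hx => by
    rw [spikeMix, if_neg (ne_of_mem_erase hx), mul_zero, add_zero]]
  simp only [spikeMix, if_pos, sum_const, card_erase_of_mem (mem_univ _), card_univ,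
    nsmul_eq_mul, Nat.cast_sub Fintype.card_pos, Nat.cast_one, mul_one, spikePowSum]
  exact add_comm _ _

end SpikeMixture

section Marginal

variable {n : ℕ} {X : Fin n → Type*} [∀ i, Fintype (X i)]

theorem marginal_apply (P : (∀ i, X i) → ℝ) (I : Finset (Fin n)) (x : ∀ i : {i // i ∈ I}, X i.1) :
    marginal P I x = ∑ y, P ((Equiv.piEquivPiSubtypeProd (· ∈ I) X).symm (x, y)) := rfl

theorem marginal_spikeMix [∀ i, DecidableEq (X i)] (δ : ℝ) (x₀ : ∀ i, X i) (I : Finset (Fin n)) :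
    marginal (spikeMix δ x₀) I = spikeMix δ (fun i : {i // i ∈ I} => x₀ i.1) := by
  set e := Equiv.piEquivPiSubtypeProd (· ∈ I) X
  have hcard := Fintype.card_congr e
  have : Nonempty (∀ j : {j // j ∉ I}, X j.1) := ⟨(e x₀).2⟩
  have : (0 : ℝ) < Fintype.card (∀ j : {j // j ∉ I}, X j.1) := by
    exact_mod_cast Fintype.card_pos
  funext x
  simp only [marginal_apply, spikeMix, Equiv.symm_apply_eq, Prod.ext_iff, ite_and,
    sum_add_distrib, sum_const, card_univ, nsmul_eq_mul, ← mul_sum, sum_ite_irrel, sum_ite_eq',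
    mem_univ, if_true, hcard, Fintype.card_prod, Nat.cast_mul, mul_zero]
  congr 1
  field_simp

theorem sum_rpow_marginal_spikeMix {m : ℕ} (δ α : ℝ) (x₀ : Fin n → Fin m)
    (I : Finset (Fin n)) :
    ∑ x, marginal (X := fun _ => Fin m) (spikeMix δ x₀) I x ^ α
      = spikePowSum ((m : ℝ) ^ I.card) δ α := by
  rw [marginal_spikeMix, sum_rpow_spikeMix]
  simp

end Marginal

section Renyi

variable {X : Type*} [Fintype X] {α : ℝ}

theorem renyiH_eq_of_sum_rpow_eq {P : X → ℝ} (hα : α ≠ 1) {s : ℝ}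
    (h : ∑ x, P x ^ α = 2 ^ ((1 - α) * s)) : renyiH α P = s := by
  have : 1 - α ≠ 0 := sub_ne_zero.2 hα.symm
  rw [renyiH, h, logb_rpow two_pos (by norm_num)]
  field_simp

theorem renyiH_le_of_sum_rpow_le {P : X → ℝ} (hα : α < 1) {ε : ℝ} (hpos : 0 < ∑ x, P x ^ α)
    (h : ∑ x, P x ^ α ≤ 2 ^ ((1 - α) * ε)) : renyiH α P ≤ ε := by
  have := logb_le_logb_of_le one_lt_two hpos h
  rw [logb_rpow two_pos (by norm_num)] at this
  rwa [renyiH, one_div, inv_mul_le_iff₀ (by linarith)]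

end Renyi

theorem renyiH_marginal_univ_spikeMix {n m : ℕ} {δ α s : ℝ} (hα : α ≠ 1) (x₀ : Fin n → Fin m)
    (h : spikePowSum ((m : ℝ) ^ n) δ α = 2 ^ ((1 - α) * s)) :
    renyiH α (marginal (X := fun _ => Fin m) (spikeMix δ x₀) univ) = s :=
  renyiH_eq_of_sum_rpow_eq hα (by rwa [sum_rpow_marginal_spikeMix, card_univ, Fintype.card_fin])

theorem renyiH_marginal_spikeMix_le {n m : ℕ} {δ α ε : ℝ} (hα0 : 0 < α) (hα1 : α < 1)
    (hm : 2 ≤ m) (hδ : δ ∈ Set.Icc (0 : ℝ) 1) (x₀ : Fin n → Fin m) {I : Finset (Fin n)}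
    (hI : I ≠ univ)
    (h : 2 * spikePowSum ((m : ℝ) ^ n) δ α / (m : ℝ) ^ (1 - α) ≤ 2 ^ ((1 - α) * ε) - 1) :
    renyiH α (marginal (X := fun _ => Fin m) (spikeMix δ x₀) I) ≤ ε := by
  have hm2 : (2 : ℝ) ≤ m := by exact_mod_cast hm
  have hm1 : (1 : ℝ) ≤ m := by linarith
  have hIn : I.card + 1 ≤ n := by simpa using card_lt_card (ssubset_univ_iff.2 hI)
  have hK : (1 : ℝ) ≤ (m : ℝ) ^ I.card := one_le_pow₀ hm1
  have hKm : (m : ℝ) ^ I.card * m ≤ (m : ℝ) ^ n := by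
    rw [← pow_succ]
    exact pow_le_pow_right₀ hm1 hIn
  have hN : (2 : ℝ) ≤ (m : ℝ) ^ n := hm2.trans (le_self_pow₀ hm1 (by omega))
  refine renyiH_le_of_sum_rpow_le hα1 ?_ ?_ <;> rw [sum_rpow_marginal_spikeMix]
  · exact one_pos.trans_le (one_le_spikePowSum hK hδ hα1.le)
  · linarith [spikePowSum_le_of_mul_le hK (by linarith) hKm hN hδ hα0.le hα1.le]

/-- For `0 < α < 1`, the vector `s·δ_{[n]}` is approximately α-entropic,
realized by a classical probability distribution. -/
theorem renyi_axis_full_classical (α : ℝ) (hα0 : 0 < α) (hα1 : α < 1)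
    (n : ℕ) (hn : 1 ≤ n) (s ε : ℝ) (hs : 0 < s) (hε : 0 < ε) :
    ∃ (d : Fin n → ℕ) (P : (∀ i, Fin (d i)) → ℝ),
      IsProbDist P ∧
      |renyiH α (marginal P Finset.univ) - s| ≤ ε ∧
      ∀ I : Finset (Fin n), I.Nonempty → I ≠ Finset.univ →
        renyiH α (marginal P I) ≤ ε := by
  have h1α : 0 < 1 - α := by linarith
  set T : ℝ := 2 ^ ((1 - α) * s)
  have hgap : 0 < (2 : ℝ) ^ ((1 - α) * ε) - 1 := sub_pos.2 (one_lt_rpow one_lt_two (by positivity))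
  obtain ⟨m, hm2, hms, hmε⟩ : ∃ m : ℕ, 2 ≤ m ∧ 2 ^ s ≤ (m : ℝ) ∧
      2 * T / (2 ^ ((1 - α) * ε) - 1) ≤ (m : ℝ) ^ (1 - α) :=
    ((eventually_ge_atTop 2).and ((tendsto_natCast_atTop_atTop.eventually_ge_atTop _).and
      (((tendsto_rpow_atTop h1α).comp tendsto_natCast_atTop_atTop).eventually_ge_atTop _))).exists
  have hm1 : (1 : ℝ) ≤ m := by exact_mod_cast (by omega : 1 ≤ m)
  have hTN : T ≤ ((m : ℝ) ^ n) ^ (1 - α) := by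
    rw [show T = (2 ^ s) ^ (1 - α) by rw [← rpow_mul zero_le_two, mul_comm]]
    exact rpow_le_rpow (by positivity) (hms.trans (le_self_pow₀ hm1 (by omega))) h1α.le
  obtain ⟨δ, hδ, hδT⟩ : ∃ δ ∈ Set.Icc (0 : ℝ) 1, spikePowSum ((m : ℝ) ^ n) δ α = T :=
    exists_spikePowSum_eq (by positivity) hα0 ⟨one_le_rpow one_le_two (by positivity), hTN⟩
  rw [div_le_comm₀ hgap (by positivity), ← hδT] at hmε
  refine ⟨fun _ => m, spikeMix δ fun _ => (⟨0, by omega⟩ : Fin m), isProbDist_spikeMix hδ _, ?_,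
    fun I _ hI => renyiH_marginal_spikeMix_le hα0 hα1 hm2 hδ _ hI hmε⟩
  rw [renyiH_marginal_univ_spikeMix hα1.ne _ hδT, sub_self, abs_zero]
  exact hε.le

end
end

section
/- Let 1 < α < ∞ and n ≥ 1, and set C = (α/(α−1)) · log₂ n. For every s > 0 there exist finite types X₁,…,Xₙ and a probability distribution P on X₁ × ⋯ × Xₙ such that s ≤ H_α(P_{[n]}) ≤ s + C and H_α(P_I) ≤ C for every nonempty proper subset I ⊊ [n]. -/
set_option maxHeartbeats 1000000

noncomputable section

lemma sum_marginal_univ {n : ℕ} {X : Fin n → Type*} [∀ i, Fintype (X i)]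
    (P : (∀ i, X i) → ℝ) (g : ℝ → ℝ) :
    ∑ x, g (marginal P Finset.univ x) = ∑ z, g (P z) := by
  haveI : IsEmpty {j : Fin n // j ∉ Finset.univ} :=
    ⟨fun j => j.2 (Finset.mem_univ j.1)⟩
  have h1 : ∀ x, marginal P Finset.univ x = P (fun i => x ⟨i, Finset.mem_univ i⟩) := by
    intro x
    unfold marginal
    rw [Fintype.sum_unique]
    simp
  let E : (∀ i : {i : Fin n // i ∈ Finset.univ}, X i.1) ≃ (∀ i, X i) :=
    { toFun := fun x i => x ⟨i, Finset.mem_univ i⟩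
      invFun := fun z i => z i.1
      left_inv := fun x => rfl
      right_inv := fun z => rfl }
  calc ∑ x, g (marginal P Finset.univ x) = ∑ x, g (P (E x)) := by
        refine Finset.sum_congr rfl fun x _ => ?_
        rw [h1]; rfl
    _ = ∑ z, g (P z) := E.sum_comp (fun z => g (P z))

/-- If a distribution has an atom of mass at least `1/n`, its Rényi entropy
(for `α > 1`) is at most `(α/(α-1))·log₂ n`. -/
lemma renyiH_le_of_atom {X : Type*} [Fintype X] (α : ℝ) (hα : 1 < α)
    (Q : X → ℝ) (hQ0 : ∀ x, 0 ≤ Q x) (n : ℕ) (hn : 1 ≤ n)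
    (x₀ : X) (hx₀ : 1 / n ≤ Q x₀) :
    renyiH α Q ≤ (α / (α - 1)) * Real.logb 2 n := by
  have hn0 : (0:ℝ) < n := by exact_mod_cast hn
  have hα0 : (0:ℝ) < α := by linarith
  have hatom : ((n:ℝ))⁻¹ ^ α ≤ Q x₀ ^ α := by
    apply Real.rpow_le_rpow (by positivity) _ hα0.le
    rwa [← one_div]
  have hsum : ((n:ℝ))⁻¹ ^ α ≤ ∑ x, Q x ^ α :=
    hatom.trans (Finset.single_le_sum (fun x _ => Real.rpow_nonneg (hQ0 x) α)
      (Finset.mem_univ x₀))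
  have hpos : (0:ℝ) < ((n:ℝ))⁻¹ ^ α := Real.rpow_pos_of_pos (by positivity) α
  have hlog : Real.logb 2 (((n:ℝ))⁻¹ ^ α) ≤ Real.logb 2 (∑ x, Q x ^ α) :=
    Real.logb_le_logb_of_le one_lt_two hpos hsum
  have hval : Real.logb 2 (((n:ℝ))⁻¹ ^ α) = -(α * Real.logb 2 n) := by
    rw [Real.logb_rpow_eq_mul_logb_of_pos (by positivity), Real.logb_inv]
    ring
  rw [hval] at hlog
  have h1α : 1 / (1 - α) < 0 := by
    apply div_neg_of_pos_of_neg one_pos; linarith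
  have key : (1/(1-α)) * Real.logb 2 (∑ x, Q x ^ α)
      ≤ (1/(1-α)) * (-(α * Real.logb 2 n)) :=
    mul_le_mul_of_nonpos_left hlog h1α.le
  have heq : (1/(1-α)) * (-(α * Real.logb 2 n)) = (α / (α - 1)) * Real.logb 2 n := by
    have h01 : (1:ℝ) - α ≠ 0 := by linarith
    have h02 : α - 1 ≠ 0 := by linarith
    field_simp
    ring
  rw [renyiH]
  linarith [key, heq]

lemma renyiH_marginal_univ {n : ℕ} {X : Fin n → Type*} [∀ i, Fintype (X i)]
    (α : ℝ) (P : (∀ i, X i) → ℝ) :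
    renyiH α (marginal P Finset.univ) = renyiH α P := by
  unfold renyiH
  rw [show (∑ x, marginal P Finset.univ x ^ α) = ∑ z, P z ^ α from
    sum_marginal_univ P (fun t => t ^ α)]

lemma renyiH_uniform_aux (α : ℝ) (hα1 : (1:ℝ) - α ≠ 0) (N : ℝ) (hN : 0 < N) :
    (1/(1-α)) * Real.logb 2 (N * N⁻¹ ^ α) = Real.logb 2 N := by
  have h1 : N * N⁻¹ ^ α = N ^ ((1:ℝ) - α) := by
    rw [Real.inv_rpow hN.le, Real.rpow_sub hN, Real.rpow_one, div_eq_mul_inv]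
  rw [h1, Real.logb_rpow_eq_mul_logb_of_pos hN]
  field_simp

/-- Lemma 2: for `α > 1` and `C = (α/(α-1))·log₂ n`, the axis vector `s·δ_{[n]}`
is attained up to an additive constant `C`, by a classical distribution. -/
theorem renyi_axis_full_classical_alpha_gt_one (α : ℝ) (hα : 1 < α)
    (n : ℕ) (hn : 1 ≤ n) (s : ℝ) (hs : 0 < s) :
    ∃ (d : Fin n → ℕ) (P : (∀ i, Fin (d i)) → ℝ),
      IsProbDist P ∧
      s ≤ renyiH α (marginal P Finset.univ) ∧
      renyiH α (marginal P Finset.univ) ≤ s + (α / (α - 1)) * Real.logb 2 n ∧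
      ∀ I : Finset (Fin n), I.Nonempty → I ≠ Finset.univ →
        renyiH α (marginal P I) ≤ (α / (α - 1)) * Real.logb 2 n := by
  classical
  have hα0 : (0:ℝ) < α := by linarith
  have hαne : α ≠ 0 := by linarith
  have h1α : (1:ℝ) - α ≠ 0 := by linarith
  have h2s1 : (1:ℝ) ≤ (2:ℝ) ^ s := Real.one_le_rpow one_le_two hs.le
  by_cases hn1 : n = 1
  · -- exact construction via IVT
    subst hn1
    set k : ℕ := ⌈(2:ℝ) ^ s⌉₊ with hk
    have hk1 : 1 ≤ k := Nat.one_le_ceil_iff.mpr (by positivity)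
    have hkR : (1:ℝ) ≤ k := by exact_mod_cast hk1
    have hks : (2:ℝ) ^ s ≤ k := Nat.le_ceil _
    set a : ℝ := ((k:ℝ) + 1)⁻¹ with ha
    have ha0 : 0 < a := by positivity
    have ha1 : a ≤ 1 := by
      rw [ha, inv_le_one_iff₀]; right; linarith
    set h : ℝ → ℝ := fun p => p ^ α + k * (((1 - p) / k) ^ α) with hh
    set f : ℝ → ℝ := fun p => (1 / (1 - α)) * Real.logb 2 (h p) with hf
    have hcont : ContinuousOn f (Set.Icc a 1) := by
      have hhc : Continuous h := by
        apply Continuous.add (Real.continuous_rpow_const hα0.le)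
        exact Continuous.mul continuous_const
          ((Real.continuous_rpow_const hα0.le).comp (by continuity))
      intro p hp
      have hpos : 0 < h p := by
        have h1 : 0 < p ^ α := Real.rpow_pos_of_pos (lt_of_lt_of_le ha0 hp.1) α
        have h2 : 0 ≤ (k:ℝ) * (((1 - p) / k) ^ α) := by
          apply mul_nonneg (by positivity)
          exact Real.rpow_nonneg (div_nonneg (by linarith [hp.2]) (by positivity)) α
        rw [hh]; exact add_pos_of_pos_of_nonneg h1 h2
      apply ContinuousAt.continuousWithinAt
      apply ContinuousAt.mul continuousAt_const
      have hl : ContinuousAt (fun t : ℝ => Real.log t / Real.log 2) (h p) :=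
        (Real.continuousAt_log hpos.ne').div_const _
      exact (show ContinuousAt (Real.logb 2) (h p) from hl).comp hhc.continuousAt
    have hkne : (k:ℝ) ≠ 0 := by positivity
    have hf1 : f 1 = 0 := by
      have hh1 : h 1 = 1 := by
        rw [hh]; dsimp only
        rw [sub_self, zero_div, Real.one_rpow, Real.zero_rpow hαne, mul_zero, add_zero]
      rw [hf]; dsimp only
      rw [hh1, Real.logb_one, mul_zero]
    have hfa : f a = Real.logb 2 ((k:ℝ) + 1) := by
      have hval : h a = ((k:ℝ) + 1) * (((k:ℝ)+1)⁻¹ ^ α) := by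
        rw [hh]
        have h2 : (1 - a) / k = a := by
          rw [ha]; field_simp; ring
        dsimp only
        rw [h2, ha]
        ring
      rw [hf]
      dsimp only
      rw [hval]
      exact renyiH_uniform_aux α h1α _ (by positivity)
    have hmem : s ∈ Set.Icc (f 1) (f a) := by
      constructor
      · rw [hf1]; exact hs.le
      · rw [hfa]
        have h1 : Real.logb 2 ((2:ℝ)^s) ≤ Real.logb 2 ((k:ℝ)+1) :=
          Real.logb_le_logb_of_le one_lt_two (by positivity) (by linarith)
        rwa [Real.logb_rpow (by norm_num) (by norm_num)] at h1
    obtain ⟨p, hp, hfp⟩ := intermediate_value_Icc' ha1 hcont hmem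
    set Q : Fin (k+1) → ℝ := fun v => if v = 0 then p else (1 - p) / k with hQ
    have hp0 : 0 < p := lt_of_lt_of_le ha0 hp.1
    have hp1 : p ≤ 1 := hp.2
    have hQ0 : ∀ v, 0 ≤ Q v := by
      intro v; rw [hQ]; dsimp only
      split
      · exact hp0.le
      · exact div_nonneg (by linarith) (by positivity)
    have hQsum : ∑ v, Q v = 1 := by
      rw [Fin.sum_univ_succ]
      simp only [hQ, if_pos rfl]
      have h3 : ∀ i : Fin k, (if (Fin.succ i : Fin (k+1)) = 0 then p else (1-p)/k) = (1-p)/k := by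
        intro i; rw [if_neg (Fin.succ_ne_zero i)]
      rw [Finset.sum_congr rfl (fun i _ => h3 i), Finset.sum_const, Finset.card_univ,
        Fintype.card_fin, nsmul_eq_mul, mul_comm ((k:ℝ)), div_mul_cancel₀ _ hkne]
      ring
    have hQpow : ∑ v, Q v ^ α = h p := by
      rw [Fin.sum_univ_succ]
      simp only [hQ, if_pos rfl]
      have h3 : ∀ i : Fin k, (if (Fin.succ i : Fin (k+1)) = 0 then p else (1-p)/k) ^ α
          = ((1-p)/k) ^ α := by
        intro i; rw [if_neg (Fin.succ_ne_zero i)]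
      rw [Finset.sum_congr rfl (fun i _ => h3 i), Finset.sum_const, Finset.card_univ,
        Fintype.card_fin, nsmul_eq_mul, hh]
    have hren : renyiH α (fun z : ∀ _ : Fin 1, Fin (k+1) => Q (z 0)) = s := by
      rw [renyiH,
        show (∑ z : ∀ _ : Fin 1, Fin (k+1), Q (z 0) ^ α) = ∑ v, Q v ^ α from
          (Equiv.funUnique (Fin 1) (Fin (k+1))).sum_comp (fun v => Q v ^ α), hQpow]
      rw [show (1 / (1 - α)) * Real.logb 2 (h p) = f p from rfl, hfp]
    have hC0 : (α / (α - 1)) * Real.logb 2 ((1:ℕ):ℝ) = 0 := by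
      simp
    refine ⟨fun _ => k + 1, fun z => Q (z 0), ?_, ?_, ?_, ?_⟩
    · constructor
      · intro z; exact hQ0 _
      · rw [show (∑ z : ∀ _ : Fin 1, Fin (k+1), Q (z 0)) = ∑ v, Q v from
          (Equiv.funUnique (Fin 1) (Fin (k+1))).sum_comp Q]
        exact hQsum
    · rw [renyiH_marginal_univ, hren]
    · rw [renyiH_marginal_univ, hren, hC0]; linarith
    · intro I hIne hIun
      exfalso
      apply hIun
      obtain ⟨x, hx⟩ := hIne
      apply Finset.eq_univ_iff_forall.mpr
      intro y
      rwa [Subsingleton.elim y x]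
  · -- n ≥ 2 : uniform star construction
    have hn2 : 2 ≤ n := by omega
    have hn0R : (0:ℝ) < n := by positivity
    have hβ1 : 1 < α / (α - 1) := by
      rw [lt_div_iff₀ (by linarith : (0:ℝ) < α - 1)]; linarith
    have hnβ : (n:ℝ) ≤ (n:ℝ) ^ (α / (α - 1)) := by
      calc (n:ℝ) = (n:ℝ) ^ (1:ℝ) := (Real.rpow_one _).symm
        _ ≤ _ := Real.rpow_le_rpow_of_exponent_le (by exact_mod_cast hn) hβ1.le
    set m : ℕ := max 1 ⌈(2:ℝ) ^ s / n⌉₊ with hm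
    have hm1 : 1 ≤ m := le_max_left _ _
    have hmR : (1:ℝ) ≤ m := by exact_mod_cast hm1
    have hmx : (2:ℝ) ^ s / n ≤ m := by
      refine le_trans (Nat.le_ceil _) ?_
      exact_mod_cast le_max_right 1 _
    have hNs : (2:ℝ) ^ s ≤ (n:ℝ) * m := by
      rw [div_le_iff₀ hn0R] at hmx
      linarith [hmx]
    have hNu : (n:ℝ) * m ≤ (2:ℝ) ^ s * (n:ℝ) ^ (α / (α - 1)) := by
      rcases le_or_gt (⌈(2:ℝ) ^ s / n⌉₊) 1 with hc | hc
      · have hmeq : m = 1 := by omega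
        rw [hmeq]
        push_cast
        calc (n:ℝ) * 1 = 1 * (n:ℝ) := by ring
          _ ≤ (2:ℝ) ^ s * (n:ℝ) ^ (α / (α - 1)) :=
            mul_le_mul h2s1 hnβ (by positivity) (by positivity)
      · have hx1 : (1:ℝ) < (2:ℝ) ^ s / n := by
          have := Nat.lt_ceil.mp hc
          exact_mod_cast this
        have hmeq : m = ⌈(2:ℝ) ^ s / n⌉₊ := max_eq_right hc.le
        have hm2 : (m:ℝ) ≤ 2 * ((2:ℝ) ^ s / n) := by
          rw [hmeq]
          have h1 := Nat.ceil_lt_add_one (by positivity : (0:ℝ) ≤ (2:ℝ) ^ s / n)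
          linarith
        have hn2R : (2:ℝ) ≤ (n:ℝ) ^ (α / (α - 1)) := by
          calc (2:ℝ) ≤ (n:ℝ) := by exact_mod_cast hn2
            _ ≤ _ := hnβ
        calc (n:ℝ) * m ≤ (n:ℝ) * (2 * ((2:ℝ) ^ s / n)) :=
              mul_le_mul_of_nonneg_left hm2 hn0R.le
          _ = 2 * (2:ℝ) ^ s := by
              field_simp
          _ ≤ (2:ℝ) ^ s * (n:ℝ) ^ (α / (α - 1)) := by
              nlinarith [Real.rpow_pos_of_pos (by positivity : (0:ℝ) < 2) s]
    -- the star construction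
    set g : Fin n × Fin m → (∀ _ : Fin n, Fin (m+1)) :=
      fun q k => if k = q.1 then Fin.succ q.2 else 0 with hg
    have hginj : Function.Injective g := by
      rintro ⟨i, j⟩ ⟨i', j'⟩ hgq
      have h1 := congrFun hgq i
      simp only [hg, if_pos rfl] at h1
      by_cases hii : i = i'
      · subst hii
        rw [if_pos rfl] at h1
        exact Prod.ext rfl (Fin.succ_injective _ h1)
      · rw [if_neg hii] at h1
        exact absurd h1 (Fin.succ_ne_zero j)
    set T : Finset (∀ _ : Fin n, Fin (m+1)) := Finset.image g Finset.univ with hT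
    have hTcard : T.card = n * m := by
      rw [hT, Finset.card_image_of_injective _ hginj]
      simp
    set P : (∀ _ : Fin n, Fin (m+1)) → ℝ :=
      fun z => if z ∈ T then ((n:ℝ) * m)⁻¹ else 0 with hP
    have hNpos : (0:ℝ) < (n:ℝ) * m := by positivity
    have hP0 : ∀ z, 0 ≤ P z := by
      intro z; rw [hP]; dsimp only; split
      · positivity
      · exact le_refl 0
    have hPsum : ∑ z, P z = 1 := by
      rw [hP]
      dsimp only
      rw [Finset.sum_ite_mem, Finset.univ_inter, Finset.sum_const, hTcard, nsmul_eq_mul]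
      push_cast
      rw [mul_inv_cancel₀ hNpos.ne']
    have hPpow : ∑ z, P z ^ α = ((n:ℝ) * m) * (((n:ℝ) * m)⁻¹ ^ α) := by
      rw [hP]
      dsimp only
      simp only [apply_ite (fun t : ℝ => t ^ α), Real.zero_rpow hαne]
      rw [Finset.sum_ite_mem, Finset.univ_inter, Finset.sum_const, hTcard, nsmul_eq_mul]
      push_cast
      ring
    have hfull : renyiH α (marginal P Finset.univ) = Real.logb 2 ((n:ℝ) * m) := by
      rw [renyiH_marginal_univ, renyiH, hPpow]
      exact renyiH_uniform_aux α h1α _ hNpos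
    refine ⟨fun _ => m + 1, P, ⟨hP0, hPsum⟩, ?_, ?_, ?_⟩
    · rw [hfull]
      have h1 : Real.logb 2 ((2:ℝ) ^ s) ≤ Real.logb 2 ((n:ℝ) * m) :=
        Real.logb_le_logb_of_le one_lt_two (by positivity) hNs
      rwa [Real.logb_rpow (by norm_num) (by norm_num)] at h1
    · rw [hfull]
      have h1 : Real.logb 2 ((n:ℝ) * m)
          ≤ Real.logb 2 ((2:ℝ) ^ s * (n:ℝ) ^ (α / (α - 1))) :=
        Real.logb_le_logb_of_le one_lt_two hNpos hNu
      have h2 : Real.logb 2 ((2:ℝ) ^ s * (n:ℝ) ^ (α / (α - 1)))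
          = s + (α / (α - 1)) * Real.logb 2 n := by
        rw [Real.logb_mul (by positivity) (by positivity),
          Real.logb_rpow (by norm_num) (by norm_num),
          Real.logb_rpow_eq_mul_logb_of_pos hn0R]
      linarith
    · intro I hIne hIun
      obtain ⟨i₀, hi₀⟩ : ∃ i, i ∉ I := by
        by_contra hcon; push_neg at hcon
        exact hIun (Finset.eq_univ_iff_forall.mpr hcon)
      apply renyiH_le_of_atom α hα _ ?_ n hn (fun _ => 0) ?_
      · intro x
        apply Finset.sum_nonneg
        intro y _
        exact hP0 _
      · -- 1/n ≤ marginal P I (fun _ => 0)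
        set yf : Fin m → (∀ j : {j : Fin n // j ∉ I}, Fin (m+1)) :=
          fun j kk => if kk.1 = i₀ then Fin.succ j else 0 with hyf
        have hyinj : ∀ j ∈ Finset.univ, ∀ j' ∈ Finset.univ, yf j = yf j' → j = j' := by
          intro j _ j' _ hjj
          have h1 := congrFun hjj ⟨i₀, hi₀⟩
          simp only [hyf, if_pos rfl] at h1
          exact Fin.succ_injective _ h1
        have hglue : ∀ j : Fin m,
            (fun i => if h : i ∈ I then (0 : Fin (m+1)) else yf j ⟨i, h⟩) = g (i₀, j) := by
          intro j
          funext kk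
          by_cases hkk : kk ∈ I
          · have hne : kk ≠ i₀ := fun hEq => hi₀ (hEq ▸ hkk)
            simp [hg, dif_pos hkk, if_neg hne]
          · simp [hyf, hg, dif_neg hkk]
        have hPg : ∀ j : Fin m, P (g (i₀, j)) = ((n:ℝ) * m)⁻¹ := by
          intro j
          rw [hP]
          dsimp only
          rw [if_pos (Finset.mem_image_of_mem g (Finset.mem_univ (i₀, j)))]
        have hmne : (m:ℝ) ≠ 0 := by positivity
        set F : (∀ j : {j : Fin n // j ∉ I}, Fin (m+1)) → ℝ :=
          fun y => P (fun i => if h : i ∈ I then (0 : Fin (m+1)) else y ⟨i, h⟩) with hF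
        have hFg : ∀ j : Fin m, F (yf j) = ((n:ℝ) * m)⁻¹ := by
          intro j
          rw [hF]
          dsimp only
          rw [show (fun i => if h : i ∈ I then (0 : Fin (m+1)) else yf j ⟨i, h⟩)
            = g (i₀, j) from hglue j, hPg j]
        have hmarg : (1:ℝ) / n ≤ ∑ y, F y := by
          calc (1:ℝ) / n = ∑ j : Fin m, ((n:ℝ) * m)⁻¹ := by
                rw [Finset.sum_const, Finset.card_univ, Fintype.card_fin, nsmul_eq_mul,
                  mul_comm ((n:ℝ)) ((m:ℝ)), mul_inv, ← mul_assoc, mul_inv_cancel₀ hmne,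
                  one_mul, one_div]
            _ = ∑ y ∈ Finset.image yf Finset.univ, F y := by
                rw [Finset.sum_image hyinj]
                exact Finset.sum_congr rfl fun j _ => (hFg j).symm
            _ ≤ ∑ y, F y := by
                apply Finset.sum_le_sum_of_subset_of_nonneg (Finset.subset_univ _)
                intro y _ _
                rw [hF]
                exact hP0 _
        exact hmarg

end
end

section
/- Let 1 < α < ∞ and let ρ be a density matrix on ℂ^{d_A} ⊗ ℂ^{d_B} with marginals ρ_A, ρ_B, and let M_α = max{ (‖ρ_A‖_∞/‖ρ_A‖_α)^{α−1}, (‖ρ_B‖_∞/‖ρ_B‖_α)^{α−1} }. If M_α ≤ √(‖ρ‖_α), then ‖ρ_A‖_α + ‖ρ_B‖_α ≤ 2·√(‖ρ‖_α). -/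
noncomputable section
open scoped ComplexOrder Kronecker

/-- A density matrix: positive semidefinite with unit trace. -/
def IsDensityMatrix {ι : Type*} [Fintype ι] (ρ : Matrix ι ι ℂ) : Prop :=
  ρ.PosSemidef ∧ ρ.trace = 1

/-- Marginal on system `A` of a bipartite matrix. -/
def margA {dA dB : ℕ} (ρ : Matrix (Fin dA × Fin dB) (Fin dA × Fin dB) ℂ) :
    Matrix (Fin dA) (Fin dA) ℂ :=
  fun a a' => ∑ b, ρ (a, b) (a', b)

/-- Marginal on system `B` of a bipartite matrix. -/
def margB {dA dB : ℕ} (ρ : Matrix (Fin dA × Fin dB) (Fin dA × Fin dB) ℂ) :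
    Matrix (Fin dB) (Fin dB) ℂ :=
  fun b b' => ∑ a, ρ (a, b) (a, b')


/-- Schatten α-norm of a (Hermitian, PSD) matrix, via its eigenvalues. -/
def schattenNorm {ι : Type*} [Fintype ι] [DecidableEq ι] (α : ℝ)
    (σ : Matrix ι ι ℂ) : ℝ :=
  if h : σ.IsHermitian then (∑ i, h.eigenvalues i ^ α) ^ (1 / α) else 0

/-- Operator (∞-Schatten) norm of a (Hermitian, PSD) matrix: its largest eigenvalue. -/
def schattenInftyNorm {ι : Type*} [Fintype ι] [DecidableEq ι]
    (σ : Matrix ι ι ℂ) : ℝ :=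
  if h : σ.IsHermitian then ⨆ i, h.eigenvalues i else 0

/-!
For a state `σ` with eigenvalues `λᵢ ≥ 0`, `∑ λᵢ = 1`, bounding `λᵢ ^ α = λᵢ ^ (α - 1) · λᵢ` by
`‖σ‖_∞ ^ (α - 1) · λᵢ` gives `‖σ‖_α ^ α ≤ ‖σ‖_∞ ^ (α - 1)`, i.e. `‖σ‖_α ≤ (‖σ‖_∞ / ‖σ‖_α) ^ (α - 1)`.
Both marginals of a density matrix are states, so the hypothesis bounds each of `‖ρ_A‖_α` and
`‖ρ_B‖_α` by `√‖ρ‖_α`.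
-/

open Matrix

section Marginals

variable {dA dB : ℕ} (ρ : Matrix (Fin dA × Fin dB) (Fin dA × Fin dB) ℂ)

lemma margA_eq_sum_submatrix : margA ρ = ∑ b, ρ.submatrix (·, b) (·, b) := by
  ext a a'
  simp [margA, Matrix.sum_apply]

lemma margB_eq_sum_submatrix : margB ρ = ∑ a, ρ.submatrix (a, ·) (a, ·) := by
  ext b b'
  simp [margB, Matrix.sum_apply]

lemma trace_margA : (margA ρ).trace = ρ.trace := by
  simp [Matrix.trace, margA, Fintype.sum_prod_type]

lemma trace_margB : (margB ρ).trace = ρ.trace := by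
  simp only [Matrix.trace, margB, Matrix.diag, Fintype.sum_prod_type]
  exact Finset.sum_comm

variable {ρ}

lemma Matrix.PosSemidef.margA (hρ : ρ.PosSemidef) : (margA ρ).PosSemidef := by
  rw [margA_eq_sum_submatrix]
  exact posSemidef_sum _ fun b _ => hρ.submatrix _

lemma Matrix.PosSemidef.margB (hρ : ρ.PosSemidef) : (margB ρ).PosSemidef := by
  rw [margB_eq_sum_submatrix]
  exact posSemidef_sum _ fun a _ => hρ.submatrix _

lemma IsDensityMatrix.margA (hρ : IsDensityMatrix ρ) : IsDensityMatrix (margA ρ) :=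
  ⟨hρ.1.margA, (trace_margA ρ).trans hρ.2⟩

lemma IsDensityMatrix.margB (hρ : IsDensityMatrix ρ) : IsDensityMatrix (margB ρ) :=
  ⟨hρ.1.margB, (trace_margB ρ).trans hρ.2⟩

end Marginals

lemma Real.sum_rpow_le_rpow_mul_sum {ι : Type*} (s : Finset ι) {x : ι → ℝ} {L p : ℝ}
    (hp : 1 ≤ p) (hx : ∀ i ∈ s, 0 ≤ x i) (hL : ∀ i ∈ s, x i ≤ L) :
    ∑ i ∈ s, x i ^ p ≤ L ^ (p - 1) * ∑ i ∈ s, x i := by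
  rw [Finset.mul_sum]
  refine Finset.sum_le_sum fun i hi => ?_
  calc x i ^ p = x i ^ (p - 1) * x i := by
        rw [← Real.rpow_add_one' (hx i hi) (by linarith), sub_add_cancel]
    _ ≤ L ^ (p - 1) * x i :=
        mul_le_mul_of_nonneg_right (Real.rpow_le_rpow (hx i hi) (hL i hi) (by linarith)) (hx i hi)

lemma Real.le_div_rpow_of_rpow_le {N L p : ℝ} (hN : 0 ≤ N) (hL : 0 ≤ L) (hp : 1 < p)
    (h : N ^ p ≤ L ^ (p - 1)) : N ≤ (L / N) ^ (p - 1) := by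
  obtain rfl | hN := hN.eq_or_lt
  · simp [Real.zero_rpow (by linarith : p - 1 ≠ 0)]
  rw [Real.div_rpow hL hN.le, le_div_iff₀ (Real.rpow_pos_of_pos hN _),
    ← Real.rpow_one_add' hN.le (by linarith), add_sub_cancel]
  exact h

section Schatten

variable {ι : Type*} [Fintype ι] [DecidableEq ι] {σ : Matrix ι ι ℂ}

lemma Matrix.PosSemidef.schattenNorm_nonneg (hσ : σ.PosSemidef) (α : ℝ) :
    0 ≤ schattenNorm α σ := by
  rw [schattenNorm, dif_pos hσ.isHermitian]
  exact Real.rpow_nonneg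
    (Finset.sum_nonneg fun i _ => Real.rpow_nonneg (hσ.eigenvalues_nonneg i) _) _

lemma Matrix.PosSemidef.schattenInftyNorm_nonneg (hσ : σ.PosSemidef) :
    0 ≤ schattenInftyNorm σ := by
  rw [schattenInftyNorm, dif_pos hσ.isHermitian]
  exact Real.iSup_nonneg hσ.eigenvalues_nonneg

lemma Matrix.PosSemidef.schattenNorm_rpow_le (hσ : σ.PosSemidef) {α : ℝ} (hα : 1 ≤ α) :
    schattenNorm α σ ^ α ≤ schattenInftyNorm σ ^ (α - 1) * σ.trace.re := by
  have hσH := hσ.isHermitian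
  have hsum : 0 ≤ ∑ i, hσH.eigenvalues i ^ α :=
    Finset.sum_nonneg fun i _ => Real.rpow_nonneg (hσ.eigenvalues_nonneg i) _
  rw [schattenNorm, schattenInftyNorm, dif_pos hσH, dif_pos hσH,
    ← Real.rpow_mul hsum, one_div_mul_cancel (by linarith), Real.rpow_one,
    hσH.trace_eq_sum_eigenvalues, Complex.re_sum]
  exact Real.sum_rpow_le_rpow_mul_sum _ hα (fun i _ => hσ.eigenvalues_nonneg i)
    fun i _ => le_ciSup (Finite.bddAbove_range _) i

lemma IsDensityMatrix.schattenNorm_le_div_rpow (hσ : IsDensityMatrix σ) {α : ℝ} (hα : 1 < α) :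
    schattenNorm α σ ≤ (schattenInftyNorm σ / schattenNorm α σ) ^ (α - 1) := by
  refine Real.le_div_rpow_of_rpow_le (hσ.1.schattenNorm_nonneg α)
    hσ.1.schattenInftyNorm_nonneg hα ?_
  simpa [hσ.2] using hσ.1.schattenNorm_rpow_le hα.le

end Schatten

/-- Eq. (5), first case: if `M_α ≤ √(‖ρ_AB‖_α)` then
`‖ρ_A‖_α + ‖ρ_B‖_α ≤ 2·√(‖ρ_AB‖_α)`. -/
theorem audenaert_sqrt_case {dA dB : ℕ} (α : ℝ) (hα : 1 < α)
    (ρ : Matrix (Fin dA × Fin dB) (Fin dA × Fin dB) ℂ) (hρ : IsDensityMatrix ρ)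
    (hM : max ((schattenInftyNorm (margA ρ) / schattenNorm α (margA ρ)) ^ (α - 1))
              ((schattenInftyNorm (margB ρ) / schattenNorm α (margB ρ)) ^ (α - 1))
          ≤ Real.sqrt (schattenNorm α ρ)) :
    schattenNorm α (margA ρ) + schattenNorm α (margB ρ)
      ≤ 2 * Real.sqrt (schattenNorm α ρ) := by
  have hA := (hρ.margA.schattenNorm_le_div_rpow hα).trans ((le_max_left _ _).trans hM)
  have hB := (hρ.margB.schattenNorm_le_div_rpow hα).trans ((le_max_right _ _).trans hM)
  linarith

end
end

section
/- (Audenaert's inequality.) Let 1 < α < ∞ and let ρ be a density matrix on ℂ^{d_A} ⊗ ℂ^{d_B} with marginals ρ_A, ρ_B. Then ‖ρ_A‖_α + ‖ρ_B‖_α ≤ 1 + ‖ρ‖_α. -/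
open Finset Matrix
open scoped ComplexOrder Kronecker

theorem Real.HolderConjugate.exists_inner_eq_Lp_of_nonneg {ι : Type*} [Fintype ι] {p q : ℝ}
    (hpq : p.HolderConjugate q) (a : ι → ℝ) (ha : ∀ i, 0 ≤ a i) :
    ∃ x : ι → ℝ, (∀ i, 0 ≤ x i) ∧ ∑ i, x i ^ q ≤ 1 ∧
      ∑ i, a i * x i = (∑ i, a i ^ p) ^ (1 / p) := by
  set N := (∑ i, a i ^ p) ^ (1 / p)
  have hS : 0 ≤ ∑ i, a i ^ p := sum_nonneg fun i _ => Real.rpow_nonneg (ha i) p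
  have hN_nonneg : 0 ≤ N := Real.rpow_nonneg hS _
  rcases hN_nonneg.eq_or_lt with hN0 | hN
  · refine ⟨0, fun _ => le_rfl, ?_, ?_⟩ <;> simp [← hN0, Real.zero_rpow hpq.symm.ne_zero]
  have hb : ∀ i, 0 ≤ a i / N := fun i => div_nonneg (ha i) hN.le
  have hb_sum : ∑ i, (a i / N) ^ p = 1 := by
    have hNp : N ^ p = ∑ i, a i ^ p := by
      rw [← Real.rpow_mul hS, one_div_mul_cancel hpq.ne_zero, Real.rpow_one]
    simp only [Real.div_rpow (ha _) hN.le, ← sum_div, ← hNp]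
    exact div_self (Real.rpow_pos_of_pos hN p).ne'
  refine ⟨fun i => (a i / N) ^ (p - 1), fun i => Real.rpow_nonneg (hb i) _, ?_, ?_⟩
  · simp only [← Real.rpow_mul (hb _), hpq.sub_one_mul_conj, hb_sum, le_refl]
  · have hterm : ∀ i, a i * (a i / N) ^ (p - 1) = N * (a i / N) ^ p := fun i => by
      rw [show p = 1 + (p - 1) by ring, Real.rpow_add' (hb i) (by linarith [hpq.lt]),
        Real.rpow_one, add_sub_cancel_left, ← mul_assoc, mul_div_cancel₀ _ hN.ne']
    simp only [hterm, ← mul_sum, hb_sum, mul_one]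

theorem le_one_of_sum_rpow_le_one {ι : Type*} [Fintype ι] {q : ℝ} (hq : 0 < q) {v : ι → ℝ}
    (hv : ∀ i, 0 ≤ v i) (h : ∑ i, v i ^ q ≤ 1) (i : ι) : v i ≤ 1 := by
  rw [← Real.rpow_le_rpow_iff (hv i) zero_le_one hq, Real.one_rpow]
  exact (single_le_sum (fun j _ => Real.rpow_nonneg (hv j) q) (mem_univ i)).trans h

theorem classical_audenaert_inequality {ι κ : Type*} [Fintype ι] [Fintype κ] {p : ℝ}
    (hp : 1 < p) (w : ι × κ → ℝ) (hw : ∀ z, 0 ≤ w z) (hw_sum : ∑ z, w z = 1) :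
    (∑ i, (∑ j, w (i, j)) ^ p) ^ (1 / p) + (∑ j, (∑ i, w (i, j)) ^ p) ^ (1 / p)
      ≤ 1 + (∑ z, w z ^ p) ^ (1 / p) := by
  have hpq := Real.HolderConjugate.conjExponent hp
  set q := p.conjExponent
  obtain ⟨x, hx, hxq, hx_dual⟩ := hpq.exists_inner_eq_Lp_of_nonneg (fun i => ∑ j, w (i, j))
    fun i => sum_nonneg fun j _ => hw (i, j)
  obtain ⟨y, hy, hyq, hy_dual⟩ := hpq.exists_inner_eq_Lp_of_nonneg (fun j => ∑ i, w (i, j))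
    fun j => sum_nonneg fun i _ => hw (i, j)
  have hxy : (∑ z : ι × κ, (x z.1 * y z.2) ^ q) ^ (1 / q) ≤ 1 := by
    refine Real.rpow_le_one (sum_nonneg fun z _ => Real.rpow_nonneg (mul_nonneg (hx _) (hy _)) q)
      ?_ (one_div_nonneg.2 hpq.symm.pos.le)
    simp only [Real.mul_rpow (hx _) (hy _), Fintype.sum_prod_type, ← mul_sum, ← sum_mul]
    exact mul_le_one₀ hxq (sum_nonneg fun j _ => Real.rpow_nonneg (hy j) q) hyq
  calc (∑ i, (∑ j, w (i, j)) ^ p) ^ (1 / p) + (∑ j, (∑ i, w (i, j)) ^ p) ^ (1 / p)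
      = ∑ z, w z * (x z.1 + y z.2) := by
        simp only [← hx_dual, ← hy_dual, mul_add, sum_add_distrib, sum_mul, Fintype.sum_prod_type]
        rw [sum_comm (f := fun j i => w (i, j) * y j)]
    _ ≤ ∑ z, w z * (1 + x z.1 * y z.2) := by
        refine sum_le_sum fun z _ => mul_le_mul_of_nonneg_left ?_ (hw z)
        nlinarith [le_one_of_sum_rpow_le_one hpq.symm.pos hx hxq z.1,
          le_one_of_sum_rpow_le_one hpq.symm.pos hy hyq z.2, hx z.1, hy z.2]
    _ = 1 + ∑ z, w z * (x z.1 * y z.2) := by simp only [mul_add, mul_one, sum_add_distrib, hw_sum]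
    _ ≤ 1 + (∑ z, w z ^ p) ^ (1 / p) := by
        gcongr
        refine (Real.inner_le_Lp_mul_Lq_of_nonneg univ hpq (fun z _ => hw z)
          fun z _ => mul_nonneg (hx z.1) (hy z.2)).trans ?_
        exact mul_le_of_le_one_right (Real.rpow_nonneg (sum_nonneg fun z _ =>
          Real.rpow_nonneg (hw z) p) _) hxy

section Majorization

variable {n : Type*} [Fintype n] [DecidableEq n]

theorem ConvexOn.sum_comp_mulVec_le {s : Set ℝ} {f : ℝ → ℝ} (hf : ConvexOn ℝ s f)
    {D : Matrix n n ℝ} (hD : D ∈ doublyStochastic ℝ n) {x : n → ℝ} (hx : ∀ i, x i ∈ s) :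
    ∑ i, f ((D *ᵥ x) i) ≤ ∑ i, f (x i) :=
  calc ∑ i, f ((D *ᵥ x) i) ≤ ∑ i, (D *ᵥ (f ∘ x)) i :=
        sum_le_sum fun i _ => hf.map_sum_le (fun _ _ => nonneg_of_mem_doublyStochastic hD)
          (sum_row_of_mem_doublyStochastic hD i) fun j _ => hx j
    _ = ∑ i, f (x i) := sum_mulVec_of_mem_doublyStochastic hD

variable {𝕜 : Type*} [RCLike 𝕜]

theorem Matrix.map_norm_sq_mem_doublyStochastic {U : Matrix n n 𝕜}
    (hU : U ∈ unitaryGroup n 𝕜) : U.map (‖·‖ ^ 2) ∈ doublyStochastic ℝ n := by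
  have row_sum (V : Matrix n n 𝕜) (hV : V * star V = 1) (i : n) : ∑ j, ‖V i j‖ ^ 2 = 1 := by
    have := congr_fun₂ hV i i
    simp only [mul_apply, star_apply, RCLike.star_def, RCLike.mul_conj, one_apply_eq] at this
    exact_mod_cast this
  refine mem_doublyStochastic_iff_sum.2 ⟨fun i j => sq_nonneg ‖U i j‖, row_sum U hU.2, fun j => ?_⟩
  simpa [conjTranspose_apply] using row_sum (star U) (by simpa using hU.1) j

theorem Matrix.IsHermitian.star_eigenvectorUnitary_mul_mul_eigenvectorUnitary {A : Matrix n n 𝕜}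
    (hA : A.IsHermitian) :
    star (hA.eigenvectorUnitary : Matrix n n 𝕜) * A * (hA.eigenvectorUnitary : Matrix n n 𝕜) =
      diagonal (RCLike.ofReal ∘ hA.eigenvalues) := by
  simpa using hA.conjStarAlgAut_star_eigenvectorUnitary

/-- The easy half of the Schur–Horn theorem. -/
theorem Matrix.IsHermitian.exists_mem_doublyStochastic_diag_conj {A : Matrix n n 𝕜}
    (hA : A.IsHermitian) {W : Matrix n n 𝕜} (hW : W ∈ unitaryGroup n 𝕜) :
    ∃ D ∈ doublyStochastic ℝ n, ∀ i, (star W * A * W) i i = ((D *ᵥ hA.eigenvalues) i : 𝕜) := by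
  set V := star W * (hA.eigenvectorUnitary : Matrix n n 𝕜)
  have hV : V ∈ unitaryGroup n 𝕜 := mul_mem (Unitary.star_mem hW) hA.eigenvectorUnitary.2
  refine ⟨V.map (‖·‖ ^ 2), map_norm_sq_mem_doublyStochastic hV, fun i => ?_⟩
  have hconj : star W * A * W = V * diagonal (RCLike.ofReal ∘ hA.eigenvalues) * star V := by
    conv_lhs => rw [hA.spectral_theorem]
    simp only [Unitary.conjStarAlgAut_apply, V, star_mul, star_star, Matrix.mul_assoc]
  rw [hconj]
  simp only [mul_apply, diagonal_apply, mulVec, dotProduct, star_apply, RCLike.star_def,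
    mul_ite, mul_zero, sum_ite_eq', mem_univ, if_true, map_apply, Function.comp_apply,
    RCLike.ofReal_sum, RCLike.ofReal_mul, RCLike.ofReal_pow]
  exact sum_congr rfl fun k _ => by rw [mul_right_comm, RCLike.mul_conj]

end Majorization

section Marginals

variable {dA dB : ℕ} (ρ : Matrix (Fin dA × Fin dB) (Fin dA × Fin dB) ℂ)

theorem margB_eq_margA_submatrix_swap : margB ρ = margA (ρ.submatrix Prod.swap Prod.swap) := rfl

theorem Matrix.IsHermitian.margA {ρ : Matrix (Fin dA × Fin dB) (Fin dA × Fin dB) ℂ}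
    (hρ : ρ.IsHermitian) : (margA ρ).IsHermitian := by
  ext a a'
  simp only [conjTranspose_apply, _root_.margA, star_sum]
  exact sum_congr rfl fun b _ => hρ.apply _ _

theorem Matrix.IsHermitian.margB {ρ : Matrix (Fin dA × Fin dB) (Fin dA × Fin dB) ℂ}
    (hρ : ρ.IsHermitian) : (margB ρ).IsHermitian :=
  (hρ.submatrix Prod.swap).margA

theorem margA_kronecker_one_mul (A : Matrix (Fin dA) (Fin dA) ℂ) :
    margA ((A ⊗ₖ 1) * ρ) = A * margA ρ := by
  ext a a'
  simp [margA, mul_apply, Fintype.sum_prod_type, one_apply, mul_sum]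
  exact sum_comm

theorem margA_mul_kronecker_one (A : Matrix (Fin dA) (Fin dA) ℂ) :
    margA (ρ * (A ⊗ₖ 1)) = margA ρ * A := by
  ext a a'
  simp [margA, mul_apply, Fintype.sum_prod_type, one_apply, sum_mul]
  exact sum_comm

theorem margA_one_kronecker_mul_comm (B : Matrix (Fin dB) (Fin dB) ℂ) :
    margA ((1 ⊗ₖ B) * ρ) = margA (ρ * (1 ⊗ₖ B)) := by
  ext a a'
  simp [margA, mul_apply, Fintype.sum_prod_type, one_apply]
  rw [sum_comm]
  exact sum_congr rfl fun _ _ => sum_congr rfl fun _ _ => mul_comm _ _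

theorem margA_conj_kronecker (A : Matrix (Fin dA) (Fin dA) ℂ) {B : Matrix (Fin dB) (Fin dB) ℂ}
    (hB : B ∈ unitaryGroup (Fin dB) ℂ) :
    margA (star (A ⊗ₖ B) * ρ * (A ⊗ₖ B)) = star A * margA ρ * A := by
  have hsplit : A ⊗ₖ B = (1 ⊗ₖ B) * (A ⊗ₖ 1) := by
    rw [← mul_kronecker_mul, Matrix.one_mul, Matrix.mul_one]
  have hsplit_star : star (A ⊗ₖ B) = (star A ⊗ₖ 1) * (1 ⊗ₖ star B) := by
    rw [star_eq_conjTranspose, conjTranspose_kronecker, ← mul_kronecker_mul, Matrix.one_mul,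
      Matrix.mul_one, star_eq_conjTranspose, star_eq_conjTranspose]
  have hB' : ((1 : Matrix (Fin dA) (Fin dA) ℂ) ⊗ₖ B) * (1 ⊗ₖ star B) = 1 := by
    rw [← mul_kronecker_mul, Matrix.one_mul, hB.2, one_kronecker_one]
  calc margA (star (A ⊗ₖ B) * ρ * (A ⊗ₖ B))
      = margA ((star A ⊗ₖ 1) * ((1 ⊗ₖ star B) * (ρ * (1 ⊗ₖ B))) * (A ⊗ₖ 1)) := by
        rw [hsplit_star, hsplit]; simp only [Matrix.mul_assoc]
    _ = star A * margA ((1 ⊗ₖ star B) * (ρ * (1 ⊗ₖ B))) * A := by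
        rw [margA_mul_kronecker_one, margA_kronecker_one_mul]
    _ = star A * margA ρ * A := by
        rw [margA_one_kronecker_mul_comm, Matrix.mul_assoc ρ, hB', Matrix.mul_one]

theorem kronecker_submatrix_swap {R m n : Type*} [CommMagma R] (A : Matrix m m R)
    (B : Matrix n n R) :
    (A ⊗ₖ B).submatrix Prod.swap Prod.swap = B ⊗ₖ A := by
  ext; simp [mul_comm]

theorem margB_conj_kronecker {A : Matrix (Fin dA) (Fin dA) ℂ} (hA : A ∈ unitaryGroup (Fin dA) ℂ)
    (B : Matrix (Fin dB) (Fin dB) ℂ) :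
    margB (star (A ⊗ₖ B) * ρ * (A ⊗ₖ B)) = star B * margB ρ * B := by
  have hswap (M N : Matrix (Fin dA × Fin dB) (Fin dA × Fin dB) ℂ) :
      M.submatrix Prod.swap Prod.swap * N.submatrix Prod.swap Prod.swap =
        (M * N).submatrix Prod.swap Prod.swap :=
    submatrix_mul_equiv M N _ (Equiv.prodComm (Fin dB) (Fin dA)) _
  rw [margB_eq_margA_submatrix_swap, margB_eq_margA_submatrix_swap,
    ← margA_conj_kronecker _ _ hA, ← kronecker_submatrix_swap A B, star_eq_conjTranspose,
    star_eq_conjTranspose, conjTranspose_submatrix, hswap, hswap]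

theorem Matrix.IsHermitian.exists_mem_doublyStochastic_eigenvalues_margA_margB
    (hρ : ρ.IsHermitian) : ∃ D ∈ doublyStochastic ℝ (Fin dA × Fin dB),
      (∀ i, ∑ j, (D *ᵥ hρ.eigenvalues) (i, j) = hρ.margA.eigenvalues i) ∧
      ∀ j, ∑ i, (D *ᵥ hρ.eigenvalues) (i, j) = hρ.margB.eigenvalues j := by
  obtain ⟨D, hD, hdiag⟩ := hρ.exists_mem_doublyStochastic_diag_conj
    (kronecker_mem_unitary hρ.margA.eigenvectorUnitary.2 hρ.margB.eigenvectorUnitary.2)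
  refine ⟨D, hD, fun i => ?_, fun j => ?_⟩
  · have h := congr_fun₂ (margA_conj_kronecker ρ
      (hρ.margA.eigenvectorUnitary : Matrix (Fin dA) (Fin dA) ℂ) hρ.margB.eigenvectorUnitary.2) i i
    simp only [hρ.margA.star_eigenvectorUnitary_mul_mul_eigenvectorUnitary, diagonal_apply_eq,
      _root_.margA, hdiag, Function.comp_apply] at h
    exact_mod_cast h
  · have h := congr_fun₂ (margB_conj_kronecker ρ
      hρ.margA.eigenvectorUnitary.2 (hρ.margB.eigenvectorUnitary : Matrix (Fin dB) (Fin dB) ℂ)) j j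
    simp only [hρ.margB.star_eigenvectorUnitary_mul_mul_eigenvectorUnitary, diagonal_apply_eq,
      _root_.margB, hdiag, Function.comp_apply] at h
    exact_mod_cast h

end Marginals

theorem schattenNorm_of_isHermitian {ι : Type*} [Fintype ι] [DecidableEq ι] (α : ℝ)
    {σ : Matrix ι ι ℂ} (hσ : σ.IsHermitian) :
    schattenNorm α σ = (∑ i, hσ.eigenvalues i ^ α) ^ (1 / α) :=
  dif_pos hσ

/-- Audenaert's inequality: `‖ρ_A‖_α + ‖ρ_B‖_α ≤ 1 + ‖ρ_AB‖_α` for `α > 1`. -/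
theorem audenaert_inequality {dA dB : ℕ} (α : ℝ) (hα : 1 < α)
    (ρ : Matrix (Fin dA × Fin dB) (Fin dA × Fin dB) ℂ) (hρ : IsDensityMatrix ρ) :
    schattenNorm α (margA ρ) + schattenNorm α (margB ρ)
      ≤ 1 + schattenNorm α ρ := by
  obtain ⟨hρ_psd, hρ_tr⟩ := hρ
  have hH := hρ_psd.isHermitian
  obtain ⟨D, hD, hwA, hwB⟩ := hH.exists_mem_doublyStochastic_eigenvalues_margA_margB
  set w := D *ᵥ hH.eigenvalues
  have hw : ∀ z, 0 ≤ w z := fun z => sum_nonneg fun k _ =>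
    mul_nonneg (nonneg_of_mem_doublyStochastic hD) (hρ_psd.eigenvalues_nonneg k)
  have hw_sum : ∑ z, w z = 1 := by
    rw [sum_mulVec_of_mem_doublyStochastic hD]
    have htr := hH.trace_eq_sum_eigenvalues
    rw [hρ_tr, ← RCLike.ofReal_sum, ← RCLike.ofReal_one, RCLike.ofReal_inj] at htr
    exact htr.symm
  have hw_major : ∑ z, w z ^ α ≤ ∑ k, hH.eigenvalues k ^ α :=
    (convexOn_rpow hα.le).sum_comp_mulVec_le hD hρ_psd.eigenvalues_nonneg
  rw [schattenNorm_of_isHermitian α hH.margA, schattenNorm_of_isHermitian α hH.margB,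
    schattenNorm_of_isHermitian α hH, ← funext hwA, ← funext hwB]
  refine (classical_audenaert_inequality hα w hw hw_sum).trans ((add_le_add_iff_left 1).2 ?_)
  exact Real.rpow_le_rpow (sum_nonneg fun z _ => Real.rpow_nonneg (hw z) α) hw_major
    (by positivity)
end

section
/- Let 1 ≤ β < ∞, let x : Fin m → ℝ and y : Fin n → ℝ be nonnegative vectors with ∑_i x_i^β = 1 and ∑_j y_j^β = 1, and let κ > 0 satisfy κ ≥ x_i for all i and κ ≥ y_j for all j. Then ∑_{i,j} (max(x_i + y_j − κ, 0))^β ≤ κ^{−β}. -/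
/-- The key estimate in the proof of Proposition 3: if `x`, `y` are nonnegative
vectors with `∑ xᵢ^β = ∑ yⱼ^β = 1` and `κ` dominates all entries, then
`∑_{i,j} ((xᵢ + yⱼ - κ)₊)^β ≤ κ^(-β)`. -/
theorem sum_posPart_pow_le (β : ℝ) (hβ : 1 ≤ β) (m n : ℕ)
    (x : Fin m → ℝ) (y : Fin n → ℝ)
    (hx0 : ∀ i, 0 ≤ x i) (hy0 : ∀ j, 0 ≤ y j)
    (hx1 : ∑ i, x i ^ β = 1) (hy1 : ∑ j, y j ^ β = 1)
    (κ : ℝ) (hκ : 0 < κ) (hκx : ∀ i, x i ≤ κ) (hκy : ∀ j, y j ≤ κ) :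
    ∑ i, ∑ j, max (x i + y j - κ) 0 ^ β ≤ κ ^ (-β) := by
  have hβ0 : (0:ℝ) ≤ β := le_trans zero_le_one hβ
  have key : ∀ i j, max (x i + y j - κ) 0 ^ β ≤ κ ^ (-β) * (x i ^ β * y j ^ β) := by
    intro i j
    have h1 : max (x i + y j - κ) 0 ≤ x i * y j / κ := by
      apply max_le
      · rw [sub_le_iff_le_add, div_add' _ _ _ (ne_of_gt hκ), le_div_iff₀ hκ]
        nlinarith [hκx i, hκy j]
      · exact div_nonneg (mul_nonneg (hx0 i) (hy0 j)) hκ.le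
    calc max (x i + y j - κ) 0 ^ β ≤ (x i * y j / κ) ^ β :=
          Real.rpow_le_rpow (le_max_right _ _) h1 hβ0
      _ = κ ^ (-β) * (x i ^ β * y j ^ β) := by
          rw [Real.div_rpow (mul_nonneg (hx0 i) (hy0 j)) hκ.le,
            Real.mul_rpow (hx0 i) (hy0 j), Real.rpow_neg hκ.le,
            div_eq_mul_inv]
          ring
  calc ∑ i, ∑ j, max (x i + y j - κ) 0 ^ β
      ≤ ∑ i, ∑ j, κ ^ (-β) * (x i ^ β * y j ^ β) := by
        apply Finset.sum_le_sum; intro i _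
        exact Finset.sum_le_sum fun j _ => key i j
    _ = κ ^ (-β) * ((∑ i, x i ^ β) * (∑ j, y j ^ β)) := by
        rw [Finset.sum_mul_sum]; simp [Finset.mul_sum, mul_assoc]
    _ = κ ^ (-β) := by rw [hx1, hy1, mul_one, mul_one]
end

section
/- Let 0 < α < 1 and n ≥ 1. Let U be an upset in the nonempty subsets of [n] (i.e. U is a nonempty collection of nonempty subsets such that I ∈ U and I ⊆ J imply J ∈ U), and let L be the set of minimal elements of U. Then for every s > 0 there exist finite types X₁,…,Xₙ and a probability distribution P on X₁ × ⋯ × Xₙ such that s ≤ H_α(P_I) ≤ s + (log₂|L| + 1)/(1−α) for every I ∈ U, and H_α(P_I) ≤ log₂|L| + 1 for every nonempty I ⊆ [n] with I ∉ U. -/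
noncomputable section

/-!
Let `K = N ^ (1 - α)` and `t = 2 ^ ((1 - α) s)`. Mix the point mass at `0 ∈ [N]ⁿ` with, for each
`J ∈ L`, weight `w_J` on the distribution that is uniform on the coordinates in `J` and `0`
elsewhere; its marginal on `I` has the same shape, with `J` replaced by `J ∩ I`. Since
`x ↦ x ^ α` is subadditive, the power sum `∑ P_I ^ α` lies between each single term
`w_J ^ α K ^ |J ∩ I|` and `1 +` their sum. With `w_J ^ α = t / K ^ |J|` the term of `J` is
`t / K ^ |J \ I|`: exactly `t` when `J ⊆ I`, and at most `t / K` otherwise. So for `I ∈ U`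
the power sum lies in `[t, 2 |L| t]`, while for `I ∉ U` it is at most `1 + |L| t / K ≤ 2 ^ (1 - α)`
once `N` is large, i.e. `H_α(P_I) ≤ 1`.
-/

open Finset Real Filter

def powerSum {X : Type*} [Fintype X] (α : ℝ) (P : X → ℝ) : ℝ :=
  ∑ x, P x ^ α

section PowerSum

variable {X : Type*} [Fintype X] {α : ℝ}

theorem le_renyiH_iff (hα : α < 1) {P : X → ℝ} (hP : 0 < powerSum α P) {r : ℝ} :
    r ≤ renyiH α P ↔ 2 ^ ((1 - α) * r) ≤ powerSum α P := by
  rw [← le_logb_iff_rpow_le one_lt_two hP, renyiH, one_div, ← div_eq_inv_mul,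
    le_div_iff₀ (sub_pos.2 hα), mul_comm, powerSum]

theorem renyiH_le_iff (hα : α < 1) {P : X → ℝ} (hP : 0 < powerSum α P) {r : ℝ} :
    renyiH α P ≤ r ↔ powerSum α P ≤ 2 ^ ((1 - α) * r) := by
  rw [← logb_le_iff_le_rpow one_lt_two hP, renyiH, one_div, ← div_eq_inv_mul,
    div_le_iff₀ (sub_pos.2 hα), mul_comm, powerSum]

theorem IsProbDist.one_le_powerSum {P : X → ℝ} (hP : IsProbDist P) (hα : α ≤ 1) :
    1 ≤ powerSum α P := by
  rw [← hP.2]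
  refine sum_le_sum fun x _ => self_le_rpow_of_le_one (hP.1 x) ?_ hα
  exact hP.2 ▸ single_le_sum (fun y _ => hP.1 y) (mem_univ x)

theorem powerSum_mono (hα : 0 ≤ α) {P Q : X → ℝ} (hP : 0 ≤ P) (hPQ : P ≤ Q) :
    powerSum α P ≤ powerSum α Q :=
  sum_le_sum fun x _ => rpow_le_rpow (hP x) (hPQ x) hα

theorem powerSum_smul {c : ℝ} (hc : 0 ≤ c) {P : X → ℝ} (hP : 0 ≤ P) :
    powerSum α (c • P) = c ^ α * powerSum α P := by
  simp only [powerSum, Pi.smul_apply, smul_eq_mul, mul_rpow hc (hP _), mul_sum]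

theorem powerSum_add_le (hα0 : 0 ≤ α) (hα1 : α ≤ 1) {P Q : X → ℝ} (hP : 0 ≤ P) (hQ : 0 ≤ Q) :
    powerSum α (P + Q) ≤ powerSum α P + powerSum α Q := by
  rw [powerSum, powerSum, powerSum, ← sum_add_distrib]
  exact sum_le_sum fun x _ => rpow_add_le_add_rpow (hP x) (hQ x) hα0 hα1

theorem powerSum_sum_le (hα0 : 0 < α) (hα1 : α ≤ 1) {κ : Type*} (s : Finset κ)
    {P : κ → X → ℝ} (hP : ∀ k ∈ s, 0 ≤ P k) :
    powerSum α (∑ k ∈ s, P k) ≤ ∑ k ∈ s, powerSum α (P k) := by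
  induction s using Finset.cons_induction with
  | empty => simp [powerSum, zero_rpow hα0.ne']
  | cons k s hk ih =>
    rw [sum_cons, sum_cons]
    have hs : ∀ j ∈ s, 0 ≤ P j := fun j hj => hP j (mem_cons_of_mem hj)
    calc powerSum α (P k + ∑ j ∈ s, P j)
        ≤ powerSum α (P k) + powerSum α (∑ j ∈ s, P j) :=
          powerSum_add_le hα0.le hα1 (hP k (mem_cons_self k s)) (sum_nonneg hs)
      _ ≤ _ := add_le_add le_rfl (ih hs)

theorem powerSum_single [DecidableEq X] (hα : 0 < α) (x₀ : X) :
    powerSum α (Pi.single x₀ 1) = 1 := by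
  rw [powerSum, sum_eq_single x₀ (fun x _ hx => by simp [hx, zero_rpow hα.ne']) (by simp)]
  simp

theorem isProbDist_single [DecidableEq X] (x₀ : X) : IsProbDist (Pi.single x₀ (1 : ℝ)) :=
  ⟨fun x => by by_cases h : x = x₀ <;> simp [h], by simp⟩

def uniformDist (X : Type*) [Fintype X] : X → ℝ :=
  fun _ => (Fintype.card X : ℝ)⁻¹

theorem powerSum_uniformDist [Nonempty X] (α : ℝ) :
    powerSum α (uniformDist X) = (Fintype.card X : ℝ) ^ (1 - α) := by
  have hX : (0 : ℝ) < Fintype.card X := by exact_mod_cast Fintype.card_pos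
  simp only [powerSum, uniformDist]
  rw [sum_const, card_univ, nsmul_eq_mul, inv_rpow hX.le, rpow_sub hX, rpow_one, div_eq_mul_inv]

theorem isProbDist_uniformDist [Nonempty X] : IsProbDist (uniformDist X) := by
  have hX : (Fintype.card X : ℝ) ≠ 0 := by exact_mod_cast Fintype.card_ne_zero
  exact ⟨fun _ => by simp [uniformDist], by simp [uniformDist, hX]⟩

end PowerSum

section Product

variable {ι : Type*} [Fintype ι] [DecidableEq ι] {X : ι → Type*} [∀ i, Fintype (X i)]

theorem powerSum_pi {α : ℝ} {f : ∀ i, X i → ℝ} (hf : ∀ i, 0 ≤ f i) :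
    powerSum α (fun x : ∀ i, X i => ∏ i, f i (x i)) = ∏ i, powerSum α (f i) := by
  simp only [powerSum, ← finsetProd_rpow _ _ (fun i _ => hf i _), Fintype.prod_sum]

theorem isProbDist_pi {f : ∀ i, X i → ℝ} (hf : ∀ i, IsProbDist (f i)) :
    IsProbDist (fun x : ∀ i, X i => ∏ i, f i (x i)) :=
  ⟨fun x => prod_nonneg fun i _ => (hf i).1 _, by rw [← Fintype.prod_sum]; simp [(hf _).2]⟩

end Product

section Marginal

variable {n : ℕ} {X : Fin n → Type*} [∀ i, Fintype (X i)]

def marginalLinearMap (I : Finset (Fin n)) :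
    ((∀ i, X i) → ℝ) →ₗ[ℝ] ((∀ i : {i : Fin n // i ∈ I}, X i.1) → ℝ) where
  toFun P := marginal P I
  map_add' P Q := by ext; simp [marginal, sum_add_distrib]
  map_smul' c P := by ext; simp [marginal, mul_sum]

theorem marginalLinearMap_apply (I : Finset (Fin n)) (P : (∀ i, X i) → ℝ) :
    marginalLinearMap I P = marginal P I :=
  rfl

theorem marginal_pi {f : ∀ i, X i → ℝ} (hf : ∀ i, ∑ t, f i t = 1) (I : Finset (Fin n)) :
    marginal (fun x => ∏ i, f i (x i)) I = fun y => ∏ i : {i // i ∈ I}, f i (y i) := by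
  ext y
  have hsplit : ∀ z : ∀ j : {j // j ∉ I}, X j.1,
      ∏ i, f i (if h : i ∈ I then y ⟨i, h⟩ else z ⟨i, h⟩)
        = (∏ i : {i // i ∈ I}, f i (y i)) * ∏ j : {j // j ∉ I}, f j (z j) := by
    intro z
    rw [← Fintype.prod_subtype_mul_prod_subtype (· ∈ I)]
    congr 1
    · exact prod_congr (by ext; simp) fun i _ => by rw [dif_pos i.2]
    · exact prod_congr (by ext; simp) fun j _ => by rw [dif_neg j.2]
  simp only [marginal, hsplit, ← mul_sum, ← Fintype.prod_sum, hf, prod_const_one, mul_one]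

end Marginal

section Block

variable {ι : Type*} [Fintype ι] [DecidableEq ι] {X : Type*} [Fintype X] [DecidableEq X]

def blockDist (x₀ : X) (S : Finset ι) : (ι → X) → ℝ :=
  fun x => ∏ i, (if i ∈ S then uniformDist X else Pi.single x₀ 1) (x i)

theorem isProbDist_blockDist (x₀ : X) (S : Finset ι) : IsProbDist (blockDist x₀ S) := by
  have : Nonempty X := ⟨x₀⟩
  refine isProbDist_pi fun i => ?_
  split_ifs
  exacts [isProbDist_uniformDist, isProbDist_single x₀]

theorem blockDist_nonneg (x₀ : X) (S : Finset ι) : 0 ≤ blockDist x₀ S :=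
  (isProbDist_blockDist x₀ S).1

theorem powerSum_blockDist {α : ℝ} (hα : 0 < α) (x₀ : X) (S : Finset ι) :
    powerSum α (blockDist x₀ S) = ((Fintype.card X : ℝ) ^ (1 - α)) ^ #S := by
  have : Nonempty X := ⟨x₀⟩
  unfold blockDist
  rw [powerSum_pi fun i => ?_]
  · simp only [apply_ite (powerSum α), powerSum_uniformDist, powerSum_single hα x₀, prod_ite_mem,
      univ_inter, prod_const]
  · split_ifs
    exacts [isProbDist_uniformDist.1, (isProbDist_single x₀).1]

theorem marginal_blockDist {n : ℕ} (x₀ : X) (S I : Finset (Fin n)) :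
    marginal (blockDist x₀ S) I = blockDist x₀ (S.subtype (· ∈ I)) := by
  have : Nonempty X := ⟨x₀⟩
  unfold blockDist
  rw [marginal_pi fun i => ?_]
  · ext y
    simp only [mem_subtype]
  · split_ifs
    exacts [isProbDist_uniformDist.2, (isProbDist_single x₀).2]

variable {κ : Type*} (x₀ : X) (L : Finset κ) (S : κ → Finset ι) {w : κ → ℝ}

def blockMixture (w : κ → ℝ) : (ι → X) → ℝ :=
  (1 - ∑ k ∈ L, w k) • blockDist x₀ ∅ + ∑ k ∈ L, w k • blockDist x₀ (S k)

theorem blockMixture_apply (x : ι → X) :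
    blockMixture x₀ L S w x =
      (1 - ∑ k ∈ L, w k) * blockDist x₀ ∅ x + ∑ k ∈ L, w k * blockDist x₀ (S k) x := by
  simp [blockMixture]

theorem isProbDist_blockMixture (hw0 : ∀ k ∈ L, 0 ≤ w k) (hw1 : ∑ k ∈ L, w k ≤ 1) :
    IsProbDist (blockMixture x₀ L S w) := by
  refine ⟨fun x => ?_, ?_⟩
  · rw [blockMixture_apply]
    exact add_nonneg (mul_nonneg (sub_nonneg.2 hw1) (blockDist_nonneg x₀ ∅ x))
      (sum_nonneg fun k hk => mul_nonneg (hw0 k hk) (blockDist_nonneg x₀ (S k) x))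
  · simp only [blockMixture_apply, sum_add_distrib, ← mul_sum]
    rw [sum_comm]
    simp only [← mul_sum, (isProbDist_blockDist _ _).2]
    rw [mul_one, ← sum_mul, mul_one, sub_add_cancel]

theorem powerSum_blockMixture_le {α : ℝ} (hα0 : 0 < α) (hα1 : α ≤ 1) (hw0 : ∀ k ∈ L, 0 ≤ w k)
    (hw1 : ∑ k ∈ L, w k ≤ 1) :
    powerSum α (blockMixture x₀ L S w)
      ≤ 1 + ∑ k ∈ L, w k ^ α * ((Fintype.card X : ℝ) ^ (1 - α)) ^ #(S k) := by
  have hD : powerSum α ((1 - ∑ k ∈ L, w k) • blockDist x₀ (∅ : Finset ι)) ≤ 1 := by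
    rw [powerSum_smul (sub_nonneg.2 hw1) (blockDist_nonneg _ _), powerSum_blockDist hα0,
      card_empty, pow_zero, mul_one]
    exact rpow_le_one (sub_nonneg.2 hw1) (by linarith [sum_nonneg hw0]) hα0.le
  have hG : ∀ k ∈ L, 0 ≤ w k • blockDist x₀ (S k) :=
    fun k hk => smul_nonneg (hw0 k hk) (blockDist_nonneg _ _)
  calc powerSum α (blockMixture x₀ L S w)
      ≤ powerSum α ((1 - ∑ k ∈ L, w k) • blockDist x₀ (∅ : Finset ι))
          + powerSum α (∑ k ∈ L, w k • blockDist x₀ (S k)) :=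
        powerSum_add_le hα0.le hα1 (smul_nonneg (sub_nonneg.2 hw1) (blockDist_nonneg _ _))
          (sum_nonneg hG)
    _ ≤ 1 + ∑ k ∈ L, powerSum α (w k • blockDist x₀ (S k)) :=
        add_le_add hD (powerSum_sum_le hα0 hα1 L hG)
    _ = _ := by
        congr 1
        refine sum_congr rfl fun k hk => ?_
        rw [powerSum_smul (hw0 k hk) (blockDist_nonneg _ _), powerSum_blockDist hα0]

theorem le_powerSum_blockMixture {α : ℝ} (hα : 0 < α) (hw0 : ∀ k ∈ L, 0 ≤ w k)
    (hw1 : ∑ k ∈ L, w k ≤ 1) {k : κ} (hk : k ∈ L) :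
    w k ^ α * ((Fintype.card X : ℝ) ^ (1 - α)) ^ #(S k) ≤ powerSum α (blockMixture x₀ L S w) := by
  rw [← powerSum_blockDist hα x₀, ← powerSum_smul (hw0 k hk) (blockDist_nonneg _ _)]
  refine powerSum_mono hα.le (smul_nonneg (hw0 k hk) (blockDist_nonneg _ _)) fun x => ?_
  rw [Pi.smul_apply, smul_eq_mul, blockMixture_apply]
  exact le_add_of_nonneg_of_le (mul_nonneg (sub_nonneg.2 hw1) (blockDist_nonneg x₀ ∅ x))
    (single_le_sum (fun j hj => mul_nonneg (hw0 j hj) (blockDist_nonneg x₀ (S j) x)) hk)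

theorem marginal_blockMixture {n : ℕ} (S : κ → Finset (Fin n)) (I : Finset (Fin n)) :
    marginal (blockMixture x₀ L S w) I = blockMixture x₀ L (fun k => (S k).subtype (· ∈ I)) w := by
  rw [← marginalLinearMap_apply, blockMixture, map_add, map_smul, map_sum]
  simp only [map_smul, marginalLinearMap_apply, marginal_blockDist]
  rw [blockMixture, subtype_eq_empty.2 fun _ _ => notMem_empty _]

end Block

theorem exists_nat_le_rpow {α : ℝ} (hα : α < 1) (B : ℝ) :
    ∃ N : ℕ, 0 < N ∧ B ≤ (N : ℝ) ^ (1 - α) := by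
  obtain ⟨N, hB, hN⟩ := (((tendsto_rpow_atTop (sub_pos.2 hα)).comp
    tendsto_natCast_atTop_atTop).eventually_ge_atTop B |>.and (eventually_gt_atTop 0)).exists
  exact ⟨N, hN, hB⟩

theorem exists_minimal_mem_subset {ι : Type*} {U L : Finset (Finset ι)}
    (hL : ∀ I, I ∈ L ↔ I ∈ U ∧ ∀ J ∈ U, J ⊆ I → J = I) {I : Finset ι} (hI : I ∈ U) :
    ∃ J ∈ L, J ⊆ I := by
  obtain ⟨J, hJI, hJ⟩ := exists_minimal_le_of_wellFoundedLT (· ∈ U) I hI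
  exact ⟨J, (hL J).2 ⟨hJ.1, fun K hK hKJ => le_antisymm hKJ (hJ.2 hK hKJ)⟩, hJI⟩

section Upset

variable {n : ℕ} {α t K : ℝ}

def upsetWeight (α t K : ℝ) (J : Finset (Fin n)) : ℝ :=
  (t / K ^ #J) ^ α⁻¹

theorem upsetWeight_nonneg (ht : 0 ≤ t) (hK : 0 ≤ K) (J : Finset (Fin n)) :
    0 ≤ upsetWeight α t K J :=
  rpow_nonneg (by positivity) _

theorem upsetWeight_rpow_mul_pow (hα : α ≠ 0) (ht : 0 ≤ t) (hK : 0 < K) (J I : Finset (Fin n)) :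
    upsetWeight α t K J ^ α * K ^ #(J.subtype (· ∈ I)) = t / K ^ #(J \ I) := by
  rw [upsetWeight, rpow_inv_rpow (by positivity) hα, card_subtype, filter_mem_eq_inter,
    ← card_sdiff_add_card_inter J I, pow_add]
  field_simp

theorem upsetWeight_le (hα0 : 0 < α) (hα1 : α ≤ 1) (ht : 0 ≤ t) (htK : t ≤ K) (hK : 1 ≤ K)
    {J : Finset (Fin n)} (hJ : J.Nonempty) : upsetWeight α t K J ≤ t / K := by
  have hJK : t / K ^ #J ≤ t / K :=
    div_le_div_of_nonneg_left ht (by positivity) (le_self_pow₀ hK hJ.card_pos.ne')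
  refine (rpow_le_self_of_le_one (by positivity) (hJK.trans ?_) ((one_le_inv₀ hα0).2 hα1)).trans hJK
  exact div_le_one_of_le₀ htK (by positivity)

theorem sum_upsetWeight_le {L : Finset (Finset (Fin n))} (hα0 : 0 < α) (hα1 : α ≤ 1) (ht : 0 ≤ t)
    (htK : t ≤ K) (hK : 1 ≤ K) (hL : ∀ J ∈ L, J.Nonempty) :
    ∑ J ∈ L, upsetWeight α t K J ≤ #L * (t / K) := by
  rw [← nsmul_eq_mul]
  exact sum_le_card_nsmul _ _ _ fun J hJ => upsetWeight_le hα0 hα1 ht htK hK (hL J hJ)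

variable {N : ℕ} [NeZero N] {L : Finset (Finset (Fin n))}

def upsetDist (N : ℕ) [NeZero N] (α t : ℝ) (L : Finset (Finset (Fin n))) :
    (Fin n → Fin N) → ℝ :=
  blockMixture (0 : Fin N) L id (upsetWeight α t ((N : ℝ) ^ (1 - α)))

theorem isProbDist_upsetDist (ht : 0 ≤ t)
    (hw : ∑ J ∈ L, upsetWeight α t ((N : ℝ) ^ (1 - α)) J ≤ 1) :
    IsProbDist (upsetDist N α t L) :=
  isProbDist_blockMixture _ _ _ (fun J _ => upsetWeight_nonneg ht (by positivity) J) hw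

theorem isProbDist_marginal_upsetDist (ht : 0 ≤ t)
    (hw : ∑ J ∈ L, upsetWeight α t ((N : ℝ) ^ (1 - α)) J ≤ 1) (I : Finset (Fin n)) :
    IsProbDist (marginal (upsetDist N α t L) I) := by
  rw [upsetDist, marginal_blockMixture]
  exact isProbDist_blockMixture _ _ _ (fun J _ => upsetWeight_nonneg ht (by positivity) J) hw

theorem powerSum_marginal_upsetDist_le (hα0 : 0 < α) (hα1 : α ≤ 1) (ht : 0 ≤ t)
    (hw : ∑ J ∈ L, upsetWeight α t ((N : ℝ) ^ (1 - α)) J ≤ 1) (I : Finset (Fin n)) :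
    powerSum α (marginal (upsetDist N α t L) I)
      ≤ 1 + ∑ J ∈ L, t / ((N : ℝ) ^ (1 - α)) ^ #(J \ I) := by
  rw [upsetDist, marginal_blockMixture]
  refine (powerSum_blockMixture_le _ _ _ hα0 hα1
    (fun J _ => upsetWeight_nonneg ht (by positivity) J) hw).trans_eq ?_
  have hK : 0 < (N : ℝ) ^ (1 - α) := by have := NeZero.pos N; positivity
  simp only [Fintype.card_fin, id, upsetWeight_rpow_mul_pow hα0.ne' ht hK]

theorem le_powerSum_marginal_upsetDist (hα0 : 0 < α) (ht : 0 ≤ t)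
    (hw : ∑ J ∈ L, upsetWeight α t ((N : ℝ) ^ (1 - α)) J ≤ 1) {I J : Finset (Fin n)}
    (hJ : J ∈ L) (hJI : J ⊆ I) :
    t ≤ powerSum α (marginal (upsetDist N α t L) I) := by
  have hK : 0 < (N : ℝ) ^ (1 - α) := by have := NeZero.pos N; positivity
  rw [upsetDist, marginal_blockMixture]
  refine Eq.trans_le ?_ (le_powerSum_blockMixture (0 : Fin N) L _ hα0
    (fun J _ => upsetWeight_nonneg ht hK.le J) hw hJ)
  rw [Fintype.card_fin, id, upsetWeight_rpow_mul_pow hα0.ne' ht hK, sdiff_eq_empty_iff_subset.2 hJI,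
    card_empty, pow_zero, div_one]

theorem renyiH_marginal_upsetDist_of_subset (hα0 : 0 < α) (hα1 : α < 1) {s : ℝ} (hs : 0 ≤ s)
    (hK : 1 ≤ (N : ℝ) ^ (1 - α))
    (hw : ∑ J ∈ L, upsetWeight α (2 ^ ((1 - α) * s)) ((N : ℝ) ^ (1 - α)) J ≤ 1)
    {I J : Finset (Fin n)} (hJ : J ∈ L) (hJI : J ⊆ I) :
    s ≤ renyiH α (marginal (upsetDist N α (2 ^ ((1 - α) * s)) L) I) ∧
      renyiH α (marginal (upsetDist N α (2 ^ ((1 - α) * s)) L) I)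
        ≤ s + (logb 2 #L + 1) / (1 - α) := by
  set t : ℝ := 2 ^ ((1 - α) * s) with ht_def
  have ht : 1 ≤ t := one_le_rpow one_le_two (mul_nonneg (sub_nonneg.2 hα1.le) hs)
  have hL : (1 : ℝ) ≤ #L := by exact_mod_cast card_pos.2 ⟨J, hJ⟩
  have hpos := one_pos.trans_le
    ((isProbDist_marginal_upsetDist (by positivity) hw I).one_le_powerSum hα1.le)
  have hbound : (2 : ℝ) ^ ((1 - α) * (s + (logb 2 #L + 1) / (1 - α))) = 2 * #L * t := by
    rw [mul_add, mul_div_cancel₀ _ (sub_pos.2 hα1).ne', rpow_add two_pos, rpow_add two_pos,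
      rpow_logb two_pos (by norm_num) (by positivity), rpow_one, ← ht_def]
    ring
  rw [le_renyiH_iff hα1 hpos, renyiH_le_iff hα1 hpos, hbound]
  refine ⟨le_powerSum_marginal_upsetDist hα0 (by positivity) hw hJ hJI, ?_⟩
  calc powerSum α (marginal (upsetDist N α t L) I)
      ≤ 1 + ∑ J ∈ L, t / ((N : ℝ) ^ (1 - α)) ^ #(J \ I) :=
        powerSum_marginal_upsetDist_le hα0 hα1.le (by positivity) hw I
    _ ≤ 1 + ∑ J ∈ L, t := by
        gcongr
        exact div_le_self (by positivity) (one_le_pow₀ hK)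
    _ ≤ 2 * #L * t := by
        rw [sum_const, nsmul_eq_mul]
        nlinarith

theorem renyiH_marginal_upsetDist_le_one (hα0 : 0 < α) (hα1 : α < 1) (ht : 0 ≤ t)
    (hK : 1 ≤ (N : ℝ) ^ (1 - α)) (hw : ∑ J ∈ L, upsetWeight α t ((N : ℝ) ^ (1 - α)) J ≤ 1)
    (hLt : #L * (t / (N : ℝ) ^ (1 - α)) ≤ 2 ^ (1 - α) - 1) {I : Finset (Fin n)}
    (hI : ∀ J ∈ L, ¬J ⊆ I) :
    renyiH α (marginal (upsetDist N α t L) I) ≤ 1 := by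
  have hpos := one_pos.trans_le ((isProbDist_marginal_upsetDist ht hw I).one_le_powerSum hα1.le)
  rw [renyiH_le_iff hα1 hpos, mul_one]
  calc powerSum α (marginal (upsetDist N α t L) I)
      ≤ 1 + ∑ J ∈ L, t / ((N : ℝ) ^ (1 - α)) ^ #(J \ I) :=
        powerSum_marginal_upsetDist_le hα0 hα1.le ht hw I
    _ ≤ 1 + ∑ J ∈ L, t / (N : ℝ) ^ (1 - α) := by
        gcongr with J hJ
        exact le_self_pow₀ hK (sdiff_nonempty.2 (hI J hJ)).card_pos.ne'
    _ ≤ 2 ^ (1 - α) := by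
        rw [sum_const, nsmul_eq_mul]
        linarith

end Upset

theorem renyi_upset_classical_alpha_lt_one_general (α : ℝ) (hα0 : 0 < α) (hα1 : α < 1)
    (n : ℕ)
    (U : Finset (Finset (Fin n))) (hUne : U.Nonempty)
    (hUnonempty : ∀ I ∈ U, I.Nonempty)
    (hUup : ∀ I ∈ U, ∀ J : Finset (Fin n), I ⊆ J → J ∈ U)
    (L : Finset (Finset (Fin n)))
    (hL : ∀ I, I ∈ L ↔ I ∈ U ∧ ∀ J ∈ U, J ⊆ I → J = I)
    (s : ℝ) (hs : 0 < s) :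
    ∃ (d : Fin n → ℕ) (P : (∀ i, Fin (d i)) → ℝ),
      IsProbDist P ∧
      (∀ I ∈ U, s ≤ renyiH α (marginal P I) ∧
        renyiH α (marginal P I) ≤ s + (Real.logb 2 L.card + 1) / (1 - α)) ∧
      ∀ I : Finset (Fin n), I.Nonempty → I ∉ U →
        renyiH α (marginal P I) ≤ Real.logb 2 L.card + 1 := by
  have hLU : ∀ J ∈ L, J ∈ U := fun J hJ => ((hL J).1 hJ).1
  obtain ⟨J₀, hJ₀, -⟩ := exists_minimal_mem_subset hL hUne.choose_spec
  set t : ℝ := 2 ^ ((1 - α) * s)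
  set c : ℝ := 2 ^ (1 - α) - 1
  have ht : 1 ≤ t := one_le_rpow one_le_two (by nlinarith)
  have hc0 : 0 < c := sub_pos.2 (one_lt_rpow one_lt_two (sub_pos.2 hα1))
  have hc1 : c ≤ 1 := by linarith [rpow_le_self_of_one_le one_le_two (by linarith : 1 - α ≤ 1)]
  obtain ⟨N, hN, hNt⟩ := exists_nat_le_rpow hα1 (max t (#L * t / c))
  have : NeZero N := ⟨hN.ne'⟩
  obtain ⟨htK, hLtK⟩ := max_le_iff.1 hNt
  have hLt : #L * (t / (N : ℝ) ^ (1 - α)) ≤ c := by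
    rw [← mul_div_assoc, div_le_iff₀ (by linarith)]
    rw [div_le_iff₀ hc0] at hLtK
    linarith
  have hw : ∑ J ∈ L, upsetWeight α t ((N : ℝ) ^ (1 - α)) J ≤ 1 :=
    (sum_upsetWeight_le hα0 hα1.le (by linarith) htK (ht.trans htK)
      fun J hJ => hUnonempty J (hLU J hJ)).trans (hLt.trans hc1)
  refine ⟨fun _ => N, upsetDist N α t L, isProbDist_upsetDist (by linarith) hw,
    fun I hI => ?_, fun I _ hI => ?_⟩
  · obtain ⟨J, hJ, hJI⟩ := exists_minimal_mem_subset hL hI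
    exact renyiH_marginal_upsetDist_of_subset hα0 hα1 hs.le (ht.trans htK) hw hJ hJI
  · refine (renyiH_marginal_upsetDist_le_one hα0 hα1 (by linarith) (ht.trans htK) hw hLt
      fun J hJ hJI => hI (hUup J (hLU J hJ) I hJI)).trans ?_
    have hL1 : (1 : ℝ) ≤ #L := by exact_mod_cast card_pos.2 ⟨J₀, hJ₀⟩
    linarith [logb_nonneg one_lt_two hL1]

/-- Theorem 3: for `0 < α < 1` and any upset `U` of nonempty subsets of `[n]`
with minimal elements `L`, the vector `s·𝟙_U` is attained up to an additive
constant depending only on `|L|`. -/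
theorem renyi_upset_classical_alpha_lt_one (α : ℝ) (hα0 : 0 < α) (hα1 : α < 1)
    (n : ℕ) (hn : 1 ≤ n)
    (U : Finset (Finset (Fin n))) (hUne : U.Nonempty)
    (hUnonempty : ∀ I ∈ U, I.Nonempty)
    (hUup : ∀ I ∈ U, ∀ J : Finset (Fin n), I ⊆ J → J ∈ U)
    (L : Finset (Finset (Fin n)))
    (hL : ∀ I, I ∈ L ↔ I ∈ U ∧ ∀ J ∈ U, J ⊆ I → J = I)
    (s : ℝ) (hs : 0 < s) :
    ∃ (d : Fin n → ℕ) (P : (∀ i, Fin (d i)) → ℝ),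
      IsProbDist P ∧
      (∀ I ∈ U, s ≤ renyiH α (marginal P I) ∧
        renyiH α (marginal P I) ≤ s + (Real.logb 2 L.card + 1) / (1 - α)) ∧
      ∀ I : Finset (Fin n), I.Nonempty → I ∉ U →
        renyiH α (marginal P I) ≤ Real.logb 2 L.card + 1 :=
  renyi_upset_classical_alpha_lt_one_general α hα0 hα1 n U hUne hUnonempty hUup L hL s hs

end
end
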